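/- arXiv:2204.00171 — 8 statements merged into one kernel-verified Lean document; each statement's English description precedes it below -/
import Mathlib

section
/- Let (r_n)_{n≥0} be a sequence of non-negative real numbers, q ∈ (0,1), c > 0, and suppose r_{n+1} ≤ (1−q)·r_n + c·r_n² for all n ≥ 0. If r_0 < q/c, then for all n ≥ 0, r_{n+1} ≤ (1/(1+q))^{n+1} · (q·r_0)/(q − c·r_0). -/
open Matrix Finset Filter

noncomputable section

abbrev EVec (d : ℕ) := EuclideanSpace ℝ (Fin d)

/-- The operator (spectral) norm of a real matrix, i.e. the norm of the induced
linear map between Euclidean spaces. -/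
noncomputable def specNorm {m n : Type*} [Fintype m] [Fintype n] [DecidableEq n]
    (A : Matrix m n ℝ) : ℝ :=
  ‖LinearMap.toContinuousLinearMap (Matrix.toEuclideanLin A)‖

/-- Matrix-vector multiplication on Euclidean space. -/
noncomputable def mulVecE {d : ℕ} (A : Matrix (Fin d) (Fin d) ℝ) (x : EVec d) : EVec d :=
  Matrix.toEuclideanLin A x

/-- Outer product `v · wᵀ` of two vectors. -/
def outer {d : ℕ} (v w : EVec d) : Matrix (Fin d) (Fin d) ℝ :=
  Matrix.of fun i j => v i * w j

/-! The potential `φ r = q r / (q - c r)` dominates `r` and is increasing on `c r < q`. Since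
`q - c ((1 - q) r + c r²) = (q - c r) (1 + c r)`, one step of the recursion from `0 ≤ r < q / c`
stays below `q / c` and satisfies `φ ((1 - q) r + c r²) ≤ φ r / (1 + q)`, the slack being
`q² r (q - c r)² ≥ 0`. Iterating, `r (n + 1) ≤ φ (r (n + 1)) ≤ (1 + q)⁻¹ ^ (n + 1) φ (r 0)`. -/

section
variable {q c : ℝ}

def potential (q c r : ℝ) : ℝ := q * r / (q - c * r)

lemma le_potential {r : ℝ} (hc : 0 ≤ c) (hr : c * r < q) :
    r ≤ potential q c r := by
  rw [potential, le_div_iff₀ (sub_pos.mpr hr)]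
  nlinarith [mul_nonneg hc (sq_nonneg r)]

lemma potential_mono {r s : ℝ} (hc : 0 ≤ c) (hs : c * s < q) (hrs : r ≤ s) :
    potential q c r ≤ potential q c s := by
  have hr : c * r < q := (mul_le_mul_of_nonneg_left hrs hc).trans_lt hs
  rw [potential, potential, div_le_div_iff₀ (sub_pos.mpr hr) (sub_pos.mpr hs)]
  nlinarith [mul_nonneg (sq_nonneg q) (sub_nonneg.mpr hrs)]

lemma sub_mul_step_eq (r : ℝ) :
    q - c * ((1 - q) * r + c * r ^ 2) = (q - c * r) * (1 + c * r) := by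
  ring

lemma potential_step_le {r : ℝ} (hq : 0 < q) (hc : 0 ≤ c) (hr₀ : 0 ≤ r) (hr : c * r < q) :
    potential q c ((1 - q) * r + c * r ^ 2) ≤ (1 + q)⁻¹ * potential q c r := by
  have hcr : 0 ≤ c * r := mul_nonneg hc hr₀
  rw [potential, potential, sub_mul_step_eq, inv_mul_eq_div, div_div,
    div_le_div_iff₀ (by nlinarith) (by nlinarith)]
  nlinarith [mul_nonneg (mul_nonneg (sq_nonneg q) hr₀) (sq_nonneg (q - c * r))]

lemma potential_contract {r r' : ℝ} (hq : 0 < q) (hc : 0 ≤ c) (hr₀ : 0 ≤ r) (hr : c * r < q)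
    (hr' : r' ≤ (1 - q) * r + c * r ^ 2) :
    c * r' < q ∧ potential q c r' ≤ (1 + q)⁻¹ * potential q c r := by
  have hstep : c * ((1 - q) * r + c * r ^ 2) < q := by
    have : 0 < (q - c * r) * (1 + c * r) := by nlinarith [mul_nonneg hc hr₀]
    linarith [sub_mul_step_eq (q := q) (c := c) r]
  exact ⟨(mul_le_mul_of_nonneg_left hr' hc).trans_lt hstep,
    (potential_mono hc hstep hr').trans (potential_step_le hq hc hr₀ hr)⟩

lemma potential_le_geometric {r : ℕ → ℝ} (hq : 0 < q) (hc : 0 ≤ c) (hnonneg : ∀ n, 0 ≤ r n)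
    (hrec : ∀ n, r (n + 1) ≤ (1 - q) * r n + c * r n ^ 2) (h0 : c * r 0 < q) (n : ℕ) :
    c * r n < q ∧ potential q c (r n) ≤ (1 + q)⁻¹ ^ n * potential q c (r 0) := by
  induction n with
  | zero => simpa using h0
  | succ n ih =>
    obtain ⟨hlt, hpot⟩ := potential_contract hq hc (hnonneg n) ih.1 (hrec n)
    refine ⟨hlt, hpot.trans ?_⟩
    rw [pow_succ', mul_assoc]
    exact mul_le_mul_of_nonneg_left ih.2 (by positivity)

end

/-- Lemma 3.1(b): if `r 0 < q / c`, then
`r (n+1) ≤ (1/(1+q))^(n+1) * (q * r 0) / (q - c * r 0)` for all `n ≥ 0`. -/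
theorem contraction_lemma_b (r : ℕ → ℝ) (q c : ℝ)
    (hq : q ∈ Set.Ioo (0 : ℝ) 1) (hc : 0 < c)
    (hnonneg : ∀ n, 0 ≤ r n)
    (hrec : ∀ n, r (n + 1) ≤ (1 - q) * r n + c * (r n) ^ 2)
    (h0 : r 0 < q / c) :
    ∀ n : ℕ, r (n + 1) ≤ (1 / (1 + q)) ^ (n + 1) * (q * r 0 / (q - c * r 0)) := by
  intro n
  have hcr₀ : c * r 0 < q := by rwa [lt_div_iff₀ hc, mul_comm] at h0
  obtain ⟨hlt, hpot⟩ := potential_le_geometric hq.1 hc.le hnonneg hrec hcr₀ (n + 1)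
  calc r (n + 1) ≤ potential q c (r (n + 1)) := le_potential hc.le hlt
    _ ≤ _ := hpot
    _ = _ := by rw [one_div, potential]
end
end

section
/- Let W = [W₁, W₂] and Z = [Z₁, Z₂] be n×n real orthogonal matrices (W·Wᵀ = Z·Zᵀ = I_n), where W₁, Z₁ ∈ ℝ^{n×k} and W₂, Z₂ ∈ ℝ^{n×(n−k)}. Then ‖W₁·W₁ᵀ − Z₁·Z₁ᵀ‖₂ = ‖W₁ᵀ·Z₂‖₂ = ‖Z₁ᵀ·W₂‖₂. -/
open Matrix Finset Filter

noncomputable section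

namespace SubspaceDistAux

open scoped Matrix.Norms.L2Operator RealInnerProductSpace

variable {l m n p : Type*} [Fintype l] [Fintype m] [Fintype n] [Fintype p]
variable [DecidableEq l] [DecidableEq m] [DecidableEq n] [DecidableEq p]

lemma specNorm_eq (A : Matrix m n ℝ) : specNorm A = ‖A‖ := rfl

lemma f_mul (A : Matrix m n ℝ) (B : Matrix n l ℝ) (x : EuclideanSpace ℝ l) :
    toEuclideanLin (A * B) x = toEuclideanLin A (toEuclideanLin B x) := by
  simp [Matrix.toEuclideanLin_apply, Matrix.mulVec_mulVec]

lemma f_one (x : EuclideanSpace ℝ n) : toEuclideanLin (1 : Matrix n n ℝ) x = x := by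
  simp [Matrix.toEuclideanLin_apply]

lemma adj (A : Matrix m n ℝ) (x : EuclideanSpace ℝ n) (y : EuclideanSpace ℝ m) :
    ⟪toEuclideanLin A x, y⟫ = ⟪x, toEuclideanLin Aᵀ y⟫ := by
  simp only [Matrix.toEuclideanLin_apply, PiLp.inner_apply, RCLike.inner_apply, conj_trivial]
  simp only [Matrix.mulVec, dotProduct, Matrix.transpose_apply, Finset.sum_mul,
    Finset.mul_sum]
  rw [Finset.sum_comm]
  exact Finset.sum_congr rfl fun i _ => Finset.sum_congr rfl fun j _ => by
    ring

lemma normsq_f (A : Matrix m n ℝ) (x : EuclideanSpace ℝ n) :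
    ‖toEuclideanLin A x‖ ^ 2 = ⟪x, toEuclideanLin (Aᵀ * A) x⟫ := by
  rw [← real_inner_self_eq_norm_sq, adj, f_mul]

lemma norm_f_le (A : Matrix m n ℝ) (x : EuclideanSpace ℝ n) :
    ‖toEuclideanLin A x‖ ≤ ‖A‖ * ‖x‖ :=
  (toEuclideanLin (𝕜 := ℝ) (m := m) (n := n) |>.trans
    LinearMap.toContinuousLinearMap A).le_opNorm x

lemma norm_le_bound (A : Matrix m n ℝ) {C : ℝ} (hC : 0 ≤ C)
    (h : ∀ x : EuclideanSpace ℝ n, ‖toEuclideanLin A x‖ ≤ C * ‖x‖) : ‖A‖ ≤ C := by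
  rw [Matrix.l2_opNorm_def]
  exact ContinuousLinearMap.opNorm_le_bound _ hC h

lemma norm_transpose (A : Matrix m n ℝ) : ‖Aᵀ‖ = ‖A‖ := by
  rw [← Matrix.conjTranspose_eq_transpose_of_trivial, Matrix.l2_opNorm_conjTranspose]

/-- If `U` has orthonormal columns then `toEuclideanLin U` is an isometry. -/
lemma norm_f_iso {U : Matrix n m ℝ} (hU : Uᵀ * U = 1) (x : EuclideanSpace ℝ m) :
    ‖toEuclideanLin U x‖ = ‖x‖ := by
  have h2 : ‖toEuclideanLin U x‖ ^ 2 = ‖x‖ ^ 2 := by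
    rw [normsq_f, hU, f_one, real_inner_self_eq_norm_sq]
  nlinarith [norm_nonneg (toEuclideanLin U x), norm_nonneg x]

lemma norm_le_one {U : Matrix n m ℝ} (hU : Uᵀ * U = 1) : ‖U‖ ≤ 1 :=
  norm_le_bound U zero_le_one fun x => by rw [norm_f_iso hU, one_mul]

/-- Pythagoras: if `AᵀA + MᵀM = 1` then `‖Ax‖² + ‖Mx‖² = ‖x‖²`. -/
lemma normsq_add {A : Matrix m n ℝ} {M : Matrix p n ℝ} (h : Aᵀ * A + Mᵀ * M = 1)
    (x : EuclideanSpace ℝ n) :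
    ‖toEuclideanLin A x‖ ^ 2 + ‖toEuclideanLin M x‖ ^ 2 = ‖x‖ ^ 2 := by
  rw [normsq_f, normsq_f, ← inner_add_right]
  have : toEuclideanLin (Aᵀ * A) x + toEuclideanLin (Mᵀ * M) x
      = toEuclideanLin (Aᵀ * A + Mᵀ * M) x := by
    rw [map_add]; rfl
  rw [this, h, f_one, real_inner_self_eq_norm_sq]

/-- Transfer of a uniform lower bound from `Mᵀ` to `M` for a square matrix. -/
lemma transfer {M : Matrix m m ℝ} {t : ℝ} (ht : 0 < t)
    (h : ∀ x : EuclideanSpace ℝ m, t * ‖x‖ ^ 2 ≤ ‖toEuclideanLin Mᵀ x‖ ^ 2)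
    (y : EuclideanSpace ℝ m) : t * ‖y‖ ^ 2 ≤ ‖toEuclideanLin M y‖ ^ 2 := by
  rcases eq_or_ne y 0 with rfl | hy
  · simp
  have hinj : Function.Injective (toEuclideanLin Mᵀ) := by
    rw [← LinearMap.ker_eq_bot, LinearMap.ker_eq_bot']
    intro x hx
    have := h x
    rw [hx, norm_zero] at this
    have : ‖x‖ ^ 2 ≤ 0 := by nlinarith
    have : ‖x‖ = 0 := by nlinarith [norm_nonneg x, sq_nonneg ‖x‖]
    exact norm_eq_zero.mp this
  obtain ⟨x, hx⟩ := (LinearMap.injective_iff_surjective.mp hinj) y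
  have key : ⟪toEuclideanLin M y, x⟫ = ‖y‖ ^ 2 := by
    rw [adj, hx, real_inner_self_eq_norm_sq]
  have hcs : ‖y‖ ^ 2 ≤ ‖toEuclideanLin M y‖ * ‖x‖ := key ▸ real_inner_le_norm _ _
  have hxb : t * ‖x‖ ^ 2 ≤ ‖y‖ ^ 2 := by have := h x; rwa [hx] at this
  have hy' : 0 < ‖y‖ := norm_pos_iff.mpr hy
  have h4 : ‖y‖ ^ 2 * ‖y‖ ^ 2 ≤ (‖toEuclideanLin M y‖ * ‖x‖) * (‖toEuclideanLin M y‖ * ‖x‖) :=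
    mul_le_mul hcs hcs (by positivity) (by positivity)
  have h5 : ‖toEuclideanLin M y‖ ^ 2 * (t * ‖x‖ ^ 2) ≤ ‖toEuclideanLin M y‖ ^ 2 * ‖y‖ ^ 2 :=
    mul_le_mul_of_nonneg_left hxb (by positivity)
  have h6 : t * (‖y‖ ^ 2 * ‖y‖ ^ 2) ≤ t * ((‖toEuclideanLin M y‖ * ‖x‖) * (‖toEuclideanLin M y‖ * ‖x‖)) :=
    mul_le_mul_of_nonneg_left h4 ht.le
  nlinarith [pow_pos hy' 2, h5, h6]

variable {N K M' : ℕ}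

set_option maxHeartbeats 1000000 in
/-- Core inequality: `‖W₁ᵀZ₂‖ ≤ ‖Z₁ᵀW₂‖`. -/
lemma key_le (W₁ Z₁ : Matrix (Fin N) (Fin K) ℝ) (W₂ Z₂ : Matrix (Fin N) (Fin M') ℝ)
    (hW22 : W₂ᵀ * W₂ = 1) (hWs : W₁ * W₁ᵀ + W₂ * W₂ᵀ = 1)
    (hZ22 : Z₂ᵀ * Z₂ = 1) (hZs : Z₁ * Z₁ᵀ + Z₂ * Z₂ᵀ = 1) :
    ‖W₁ᵀ * Z₂‖ ≤ ‖Z₁ᵀ * W₂‖ := by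
  set A := W₁ᵀ * Z₂ with hA
  set B := Z₁ᵀ * W₂ with hB
  set M := W₂ᵀ * Z₂ with hM
  have hid1 : Aᵀ * A + Mᵀ * M = 1 := by
    rw [hA, hM]
    simp only [Matrix.transpose_mul, Matrix.transpose_transpose]
    calc Z₂ᵀ * W₁ * (W₁ᵀ * Z₂) + Z₂ᵀ * W₂ * (W₂ᵀ * Z₂)
        = Z₂ᵀ * (W₁ * W₁ᵀ + W₂ * W₂ᵀ) * Z₂ := by
          simp only [Matrix.mul_add, Matrix.add_mul, Matrix.mul_assoc]
      _ = 1 := by rw [hWs, Matrix.mul_one, hZ22]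
  have hid2 : Bᵀ * B + (Mᵀ)ᵀ * Mᵀ = 1 := by
    rw [hB, hM]
    simp only [Matrix.transpose_mul, Matrix.transpose_transpose]
    calc W₂ᵀ * Z₁ * (Z₁ᵀ * W₂) + W₂ᵀ * Z₂ * (Z₂ᵀ * W₂)
        = W₂ᵀ * (Z₁ * Z₁ᵀ + Z₂ * Z₂ᵀ) * W₂ := by
          simp only [Matrix.mul_add, Matrix.add_mul, Matrix.mul_assoc]
      _ = 1 := by rw [hZs, Matrix.mul_one, hW22]
  -- pointwise identities
  have hAy : ∀ y : EuclideanSpace ℝ (Fin M'),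
      ‖toEuclideanLin A y‖ ^ 2 + ‖toEuclideanLin M y‖ ^ 2 = ‖y‖ ^ 2 := normsq_add hid1
  have hBx : ∀ x : EuclideanSpace ℝ (Fin M'),
      ‖toEuclideanLin B x‖ ^ 2 + ‖toEuclideanLin Mᵀ x‖ ^ 2 = ‖x‖ ^ 2 := normsq_add hid2
  set b := ‖B‖ with hb
  have hb0 : 0 ≤ b := norm_nonneg _
  apply norm_le_bound _ hb0
  intro y
  rcases le_or_gt 1 b with h1 | h1
  · -- ‖B‖ ≥ 1 : use ‖Ay‖ ≤ ‖y‖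
    have h0 := hAy y
    have h2 : ‖toEuclideanLin A y‖ ^ 2 ≤ ‖y‖ ^ 2 := by nlinarith [sq_nonneg ‖toEuclideanLin M y‖]
    have h3 : ‖toEuclideanLin A y‖ ≤ ‖y‖ := by
      nlinarith [norm_nonneg (toEuclideanLin A y), norm_nonneg y]
    calc ‖toEuclideanLin A y‖ ≤ ‖y‖ := h3
      _ = 1 * ‖y‖ := (one_mul _).symm
      _ ≤ b * ‖y‖ := mul_le_mul_of_nonneg_right h1 (norm_nonneg y)
  · set t := 1 - b ^ 2 with htdef
    have ht : 0 < t := by nlinarith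
    have hMt : ∀ x : EuclideanSpace ℝ (Fin M'), t * ‖x‖ ^ 2 ≤ ‖toEuclideanLin Mᵀ x‖ ^ 2 := by
      intro x
      have h1 := hBx x
      have h2 : ‖toEuclideanLin B x‖ ≤ b * ‖x‖ := norm_f_le B x
      nlinarith [norm_nonneg (toEuclideanLin B x), norm_nonneg x]
    have hMy := transfer ht hMt y
    have h3 := hAy y
    have h4 : ‖toEuclideanLin A y‖ ^ 2 ≤ b ^ 2 * ‖y‖ ^ 2 := by nlinarith
    nlinarith [norm_nonneg (toEuclideanLin A y), norm_nonneg y, mul_nonneg hb0 (norm_nonneg y)]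

/-- `‖W₁ᵀZ₂‖ ≤ ‖W₁W₁ᵀ - Z₁Z₁ᵀ‖`. -/
lemma le_diff (W₁ Z₁ : Matrix (Fin N) (Fin K) ℝ) (W₂ Z₂ : Matrix (Fin N) (Fin M') ℝ)
    (hW11 : W₁ᵀ * W₁ = 1) (hZ12 : Z₁ᵀ * Z₂ = 0) (hZ22 : Z₂ᵀ * Z₂ = 1) :
    ‖W₁ᵀ * Z₂‖ ≤ ‖W₁ * W₁ᵀ - Z₁ * Z₁ᵀ‖ := by
  have hfact : W₁ᵀ * Z₂ = W₁ᵀ * (W₁ * W₁ᵀ - Z₁ * Z₁ᵀ) * Z₂ := by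
    have : W₁ᵀ * (W₁ * W₁ᵀ - Z₁ * Z₁ᵀ) * Z₂
        = (W₁ᵀ * W₁) * (W₁ᵀ * Z₂) - (W₁ᵀ * Z₁) * (Z₁ᵀ * Z₂) := by
          simp only [Matrix.mul_sub, Matrix.sub_mul, Matrix.mul_assoc]
    rw [this, hW11, hZ12, Matrix.mul_zero, Matrix.one_mul, sub_zero]
  calc ‖W₁ᵀ * Z₂‖ = ‖W₁ᵀ * (W₁ * W₁ᵀ - Z₁ * Z₁ᵀ) * Z₂‖ := by rw [← hfact]
    _ ≤ ‖W₁ᵀ * (W₁ * W₁ᵀ - Z₁ * Z₁ᵀ)‖ * ‖Z₂‖ := Matrix.l2_opNorm_mul _ _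
    _ ≤ ‖W₁ᵀ‖ * ‖W₁ * W₁ᵀ - Z₁ * Z₁ᵀ‖ * ‖Z₂‖ := by
        apply mul_le_mul_of_nonneg_right (Matrix.l2_opNorm_mul _ _) (norm_nonneg _)
    _ ≤ 1 * ‖W₁ * W₁ᵀ - Z₁ * Z₁ᵀ‖ * 1 := by
        apply mul_le_mul
        · apply mul_le_mul_of_nonneg_right _ (norm_nonneg _)
          rw [norm_transpose]; exact norm_le_one hW11
        · exact norm_le_one hZ22
        · exact norm_nonneg _
        · positivity
    _ = ‖W₁ * W₁ᵀ - Z₁ * Z₁ᵀ‖ := by ring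

set_option maxHeartbeats 1000000 in
/-- `‖W₁W₁ᵀ - Z₁Z₁ᵀ‖ ≤ max ‖W₁ᵀZ₂‖ ‖Z₁ᵀW₂‖`. -/
lemma diff_le (W₁ Z₁ : Matrix (Fin N) (Fin K) ℝ) (W₂ Z₂ : Matrix (Fin N) (Fin M') ℝ)
    (hW11 : W₁ᵀ * W₁ = 1) (hW22 : W₂ᵀ * W₂ = 1) (hW12 : W₁ᵀ * W₂ = 0)
    (hZs : Z₁ * Z₁ᵀ + Z₂ * Z₂ᵀ = 1) (hWs : W₁ * W₁ᵀ + W₂ * W₂ᵀ = 1) :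
    ‖W₁ * W₁ᵀ - Z₁ * Z₁ᵀ‖ ≤ max ‖W₁ᵀ * Z₂‖ ‖Z₁ᵀ * W₂‖ := by
  set c := max ‖W₁ᵀ * Z₂‖ ‖Z₁ᵀ * W₂‖ with hc
  have hc0 : 0 ≤ c := le_trans (norm_nonneg _) (le_max_left _ _)
  apply norm_le_bound _ hc0
  intro x
  have hD : W₁ * W₁ᵀ - Z₁ * Z₁ᵀ = W₁ * (W₁ᵀ * Z₂) * Z₂ᵀ - W₂ * (W₂ᵀ * Z₁) * Z₁ᵀ := by
    have e1 : W₁ * (W₁ᵀ * Z₂) * Z₂ᵀ = (W₁ * W₁ᵀ) * (Z₂ * Z₂ᵀ) := by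
      simp only [Matrix.mul_assoc]
    have e2 : W₂ * (W₂ᵀ * Z₁) * Z₁ᵀ = (W₂ * W₂ᵀ) * (Z₁ * Z₁ᵀ) := by
      simp only [Matrix.mul_assoc]
    have e3 : Z₂ * Z₂ᵀ = 1 - Z₁ * Z₁ᵀ := by rw [← hZs]; abel
    have e4 : W₂ * W₂ᵀ = 1 - W₁ * W₁ᵀ := by rw [← hWs]; abel
    rw [e1, e2, e3, e4]
    noncomm_ring
  rw [hD]
  have happ : toEuclideanLin (W₁ * (W₁ᵀ * Z₂) * Z₂ᵀ - W₂ * (W₂ᵀ * Z₁) * Z₁ᵀ) x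
      = toEuclideanLin W₁ (toEuclideanLin (W₁ᵀ * Z₂) (toEuclideanLin Z₂ᵀ x))
        - toEuclideanLin W₂ (toEuclideanLin (W₂ᵀ * Z₁) (toEuclideanLin Z₁ᵀ x)) := by
    simp only [map_sub, LinearMap.sub_apply, f_mul]
  rw [happ]
  set u := toEuclideanLin (W₁ᵀ * Z₂) (toEuclideanLin Z₂ᵀ x) with hu
  set v := toEuclideanLin (W₂ᵀ * Z₁) (toEuclideanLin Z₁ᵀ x) with hv
  have horth : ⟪toEuclideanLin W₁ u, toEuclideanLin W₂ v⟫ = 0 := by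
    rw [adj, ← f_mul, hW12]
    simp
  have hpyth : ‖toEuclideanLin W₁ u - toEuclideanLin W₂ v‖ ^ 2
      = ‖toEuclideanLin W₁ u‖ ^ 2 + ‖toEuclideanLin W₂ v‖ ^ 2 := by
    rw [norm_sub_sq_real, horth]; ring
  have hWu : ‖toEuclideanLin W₁ u‖ = ‖u‖ := norm_f_iso hW11 u
  have hWv : ‖toEuclideanLin W₂ v‖ = ‖v‖ := norm_f_iso hW22 v
  have hub : ‖u‖ ≤ c * ‖toEuclideanLin Z₂ᵀ x‖ :=
    le_trans (norm_f_le _ _) (mul_le_mul_of_nonneg_right (le_max_left _ _) (norm_nonneg _))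
  have hvb : ‖v‖ ≤ c * ‖toEuclideanLin Z₁ᵀ x‖ := by
    refine le_trans (norm_f_le _ _) (mul_le_mul_of_nonneg_right ?_ (norm_nonneg _))
    rw [show W₂ᵀ * Z₁ = (Z₁ᵀ * W₂)ᵀ by rw [Matrix.transpose_mul, Matrix.transpose_transpose],
      norm_transpose]
    exact le_max_right _ _
  have hsplit : ‖toEuclideanLin Z₁ᵀ x‖ ^ 2 + ‖toEuclideanLin Z₂ᵀ x‖ ^ 2 = ‖x‖ ^ 2 := by
    have h1 : (Z₁ᵀ)ᵀ * Z₁ᵀ + (Z₂ᵀ)ᵀ * Z₂ᵀ = 1 := by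
      rw [Matrix.transpose_transpose, Matrix.transpose_transpose, hZs]
    exact normsq_add h1 x
  have hsq : ‖toEuclideanLin W₁ u - toEuclideanLin W₂ v‖ ^ 2 ≤ (c * ‖x‖) ^ 2 := by
    rw [hpyth, hWu, hWv]
    have h1 : ‖u‖ ^ 2 ≤ c ^ 2 * ‖toEuclideanLin Z₂ᵀ x‖ ^ 2 := by
      nlinarith [norm_nonneg u, norm_nonneg (toEuclideanLin Z₂ᵀ x)]
    have h2 : ‖v‖ ^ 2 ≤ c ^ 2 * ‖toEuclideanLin Z₁ᵀ x‖ ^ 2 := by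
      nlinarith [norm_nonneg v, norm_nonneg (toEuclideanLin Z₁ᵀ x)]
    nlinarith [hsplit]
  have hfin := Real.sqrt_le_sqrt hsq
  rwa [Real.sqrt_sq (norm_nonneg _), Real.sqrt_sq (mul_nonneg hc0 (norm_nonneg x))] at hfin

end SubspaceDistAux

open scoped Matrix.Norms.L2Operator

set_option maxHeartbeats 1000000 in
/-- Lemma 3.4 (Golub–Van Loan): if `W = [W₁, W₂]` and `Z = [Z₁, Z₂]` are orthogonal
`n × n` matrices, then `‖W₁W₁ᵀ - Z₁Z₁ᵀ‖₂ = ‖W₁ᵀZ₂‖₂ = ‖Z₁ᵀW₂‖₂`. -/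
theorem subspace_distance {n k : ℕ} (hk : k ≤ n)
    (W₁ Z₁ : Matrix (Fin n) (Fin k) ℝ) (W₂ Z₂ : Matrix (Fin n) (Fin (n - k)) ℝ)
    (hW : Matrix.fromCols W₁ W₂ * (Matrix.fromCols W₁ W₂)ᵀ = 1)
    (hZ : Matrix.fromCols Z₁ Z₂ * (Matrix.fromCols Z₁ Z₂)ᵀ = 1) :
    specNorm (W₁ * W₁ᵀ - Z₁ * Z₁ᵀ) = specNorm (W₁ᵀ * Z₂) ∧
    specNorm (W₁ᵀ * Z₂) = specNorm (Z₁ᵀ * W₂) := by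
  classical
  have e : Fin n ≃ Fin k ⊕ Fin (n - k) :=
    (finCongr (Nat.add_sub_cancel' hk).symm).trans finSumFinEquiv.symm
  rw [Matrix.transpose_fromCols] at hW hZ
  have hW' := (Matrix.fromCols_mul_fromRows_eq_one_comm e W₁ W₂ W₁ᵀ W₂ᵀ).mp hW
  have hZ' := (Matrix.fromCols_mul_fromRows_eq_one_comm e Z₁ Z₂ Z₁ᵀ Z₂ᵀ).mp hZ
  rw [Matrix.fromRows_mul_fromCols, ← Matrix.fromBlocks_one] at hW' hZ'
  have hW11 : W₁ᵀ * W₁ = 1 := by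
    have h := congrArg Matrix.toBlocks₁₁ hW'
    simp only [Matrix.toBlocks_fromBlocks₁₁] at h; exact h
  have hW12 : W₁ᵀ * W₂ = 0 := by
    have h := congrArg Matrix.toBlocks₁₂ hW'
    simp only [Matrix.toBlocks_fromBlocks₁₂] at h; exact h
  have hW22 : W₂ᵀ * W₂ = 1 := by
    have h := congrArg Matrix.toBlocks₂₂ hW'
    simp only [Matrix.toBlocks_fromBlocks₂₂] at h; exact h
  have hZ12 : Z₁ᵀ * Z₂ = 0 := by
    have h := congrArg Matrix.toBlocks₁₂ hZ'
    simp only [Matrix.toBlocks_fromBlocks₁₂] at h; exact h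
  have hZ22 : Z₂ᵀ * Z₂ = 1 := by
    have h := congrArg Matrix.toBlocks₂₂ hZ'
    simp only [Matrix.toBlocks_fromBlocks₂₂] at h; exact h
  have hWs : W₁ * W₁ᵀ + W₂ * W₂ᵀ = 1 := by rwa [Matrix.fromCols_mul_fromRows] at hW
  have hZs : Z₁ * Z₁ᵀ + Z₂ * Z₂ᵀ = 1 := by rwa [Matrix.fromCols_mul_fromRows] at hZ
  have hAB : ‖W₁ᵀ * Z₂‖ = ‖Z₁ᵀ * W₂‖ :=
    le_antisymm (SubspaceDistAux.key_le W₁ Z₁ W₂ Z₂ hW22 hWs hZ22 hZs)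
      (SubspaceDistAux.key_le Z₁ W₁ Z₂ W₂ hZ22 hZs hW22 hWs)
  have h1 : ‖W₁ᵀ * Z₂‖ ≤ ‖W₁ * W₁ᵀ - Z₁ * Z₁ᵀ‖ :=
    SubspaceDistAux.le_diff W₁ Z₁ W₂ Z₂ hW11 hZ12 hZ22
  have h2 := SubspaceDistAux.diff_le W₁ Z₁ W₂ Z₂ hW11 hW22 hW12 hZs hWs
  rw [hAB, max_self] at h2
  refine ⟨le_antisymm ?_ h1, hAB⟩
  rw [SubspaceDistAux.specNorm_eq, SubspaceDistAux.specNorm_eq, hAB]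
  exact h2
end
end

section
/- Suppose E, x*, δ, M, μ, L satisfy Assumption (A) with k = 1. Let x ∈ ℝ^d with r = ‖x − x*‖₂ < δ, let v₁ be a unit eigenvector of ∇²E(x) corresponding to its smallest eigenvalue, let β = 2/(L+μ), and set x⁺ = x − β·(I − 2·v₁·v₁ᵀ)·∇E(x). Then ‖x⁺ − x*‖₂ ≤ (1 − 2μ/(L+μ))·r + M·r²/(L+μ). -/
open Matrix Finset Filter

noncomputable section

/-- Assumption (A) with index `k` for the energy `E` with Hessian `hess`, saddle point
`xstar`, radius `δ`, Lipschitz constant `M` and eigenvalue bounds `0 < μ < L`: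
`E` is twice continuously differentiable, `hess` is the (symmetric) Hessian of `E`,
`∇E(x*) = 0`, the Hessian is `M`-Lipschitz on `U(x*, δ)`, and for every
`x ∈ U(x*, δ)` the eigenvalues `λ₁ ≤ … ≤ λ_d` of `∇²E(x)` satisfy
`λ₁ ≤ … ≤ λ_k < 0 < λ_{k+1} ≤ … ≤ λ_d` and `μ ≤ |λᵢ| ≤ L`. -/
def AssumptionA {d : ℕ} (k : ℕ) (E : EVec d → ℝ)
    (hess : EVec d → Matrix (Fin d) (Fin d) ℝ)
    (xstar : EVec d) (δ M μ L : ℝ) : Prop :=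
  ContDiff ℝ 2 E ∧
  (∀ y, HasFDerivAt (gradient E)
    (LinearMap.toContinuousLinearMap (Matrix.toEuclideanLin (hess y))) y) ∧
  (∀ y, (hess y).IsSymm) ∧
  gradient E xstar = 0 ∧
  0 < δ ∧ 0 < M ∧ 0 < μ ∧ μ < L ∧
  (∀ x y : EVec d, ‖x - xstar‖ < δ → ‖y - xstar‖ < δ →
    specNorm (hess x - hess y) ≤ M * ‖x - y‖) ∧
  (∀ x : EVec d, ‖x - xstar‖ < δ →
    ∃ (u : Fin d → EVec d) (lam : Fin d → ℝ),
      (∀ i j, (inner ℝ (u i) (u j) : ℝ) = if i = j then 1 else 0) ∧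
      (∀ i, mulVecE (hess x) (u i) = lam i • u i) ∧
      Monotone lam ∧
      (∀ i : Fin d, (i : ℕ) < k → lam i < 0) ∧
      (∀ i : Fin d, k ≤ (i : ℕ) → 0 < lam i) ∧
      (∀ i, μ ≤ |lam i| ∧ |lam i| ≤ L))

/-! Write `e = x - x*`, `H = ∇²E(x)` and `P = I - 2 v₁ v₁ᵀ`, the reflection in `v₁ᗮ`. Since
`∇E(x*) = 0` and `∇²E` is `M`-Lipschitz, `∇E(x) = H e + R` with `‖R‖ ≤ M r² / 2`, so
`x⁺ - x* = (I - β P H) e - β P R`. As `v₁` spans the only negative eigendirection of `H`,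
`P H` acts by `|λᵢ|` on an orthonormal eigenbasis of `H`; hence `I - β P H` acts by
`1 - β |λᵢ| ∈ [-(L - μ)/(L + μ), (L - μ)/(L + μ)]`, and `P` is an isometry. -/

open scoped RealInnerProductSpace

theorem LinearMap.IsSymmetric.inner_eq_zero_of_eigenvalue_ne {E : Type*} [NormedAddCommGroup E]
    [InnerProductSpace ℝ E] {A : E →ₗ[ℝ] E} (hA : A.IsSymmetric) {u w : E} {a c : ℝ}
    (hu : A u = a • u) (hw : A w = c • w) (hac : a ≠ c) : ⟪u, w⟫ = 0 := by
  have : a * ⟪u, w⟫ = c * ⟪u, w⟫ := by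
    rw [← real_inner_smul_left, ← hu, hA, hw, real_inner_smul_right]
  by_contra h
  exact hac (mul_right_cancel₀ h this)

theorem abs_one_sub_two_div_mul_le {μ L t : ℝ} (hμ : 0 < μ) (hμt : μ ≤ t) (htL : t ≤ L) :
    |1 - 2 / (L + μ) * t| ≤ (L - μ) / (L + μ) := by
  have hs : 0 < L + μ := by linarith
  rw [show 1 - 2 / (L + μ) * t = (L + μ - 2 * t) / (L + μ) by field_simp, abs_div,
    abs_of_pos hs]
  gcongr
  exact abs_le.mpr ⟨by linarith, by linarith⟩

section OrthonormalEigenbasis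

variable {ι E : Type*} [Fintype ι] [NormedAddCommGroup E] [InnerProductSpace ℝ E]
  (b : OrthonormalBasis ι ℝ E) {A : E →ₗ[ℝ] E} {lam : ι → ℝ} {i₀ : ι} {v : E} {lam₁ : ℝ}

theorem OrthonormalBasis.norm_apply_le_of_apply_eq_smul {T : E →ₗ[ℝ] E} {c : ι → ℝ}
    (hT : ∀ i, T (b i) = c i • b i) {C : ℝ} (hC0 : 0 ≤ C) (hC : ∀ i, |c i| ≤ C) (e : E) :
    ‖T e‖ ≤ C * ‖e‖ := by
  have hTe : T e = ∑ i, (c i * ⟪b i, e⟫) • b i := by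
    conv_lhs => rw [← b.sum_repr' e]
    simp only [map_sum, map_smul, hT, smul_smul, mul_comm]
  have hcoord : ∀ i, ⟪b i, T e⟫ = c i * ⟪b i, e⟫ := fun i => by
    rw [hTe, b.orthonormal.inner_right_fintype]
  have hsq : ‖T e‖ ^ 2 ≤ (C * ‖e‖) ^ 2 := calc
    ‖T e‖ ^ 2 = ∑ i, c i ^ 2 * ⟪b i, e⟫ ^ 2 := by
      simp only [← b.sum_sq_inner_right (T e), hcoord, mul_pow]
    _ ≤ ∑ i, C ^ 2 * ⟪b i, e⟫ ^ 2 := Finset.sum_le_sum fun i _ =>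
      mul_le_mul_of_nonneg_right (sq_le_sq' (abs_le.mp (hC i)).1 (abs_le.mp (hC i)).2)
        (sq_nonneg _)
    _ = (C * ‖e‖) ^ 2 := by rw [← Finset.mul_sum, b.sum_sq_inner_right, mul_pow]
  exact (pow_le_pow_iff_left₀ (norm_nonneg _) (by positivity) two_ne_zero).mp hsq

theorem OrthonormalBasis.mem_span_singleton_of_inner_eq_zero (hv : v ≠ 0) {i : ι}
    (h : ∀ j ≠ i, ⟪b j, v⟫ = 0) : b i ∈ ℝ ∙ v := by
  have hv_eq : v = ⟪b i, v⟫ • b i := by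
    conv_lhs => rw [← b.sum_repr' v]
    exact Finset.sum_eq_single i (fun j _ hj => by rw [h j hj, zero_smul]) (by simp)
  set a := ⟪b i, v⟫
  have ha : a ≠ 0 := fun h0 => hv (by rw [hv_eq, h0, zero_smul])
  refine Submodule.mem_span_singleton.mpr ⟨a⁻¹, ?_⟩
  rw [hv_eq, smul_smul, inv_mul_cancel₀ ha, one_smul]

theorem OrthonormalBasis.reflection_apply_eq_abs_smul (hA : A.IsSymmetric)
    (hb : ∀ i, A (b i) = lam i • b i) (hneg : lam i₀ < 0) (hpos : ∀ j ≠ i₀, 0 < lam j)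
    (hv0 : v ≠ 0) (hv : A v = lam₁ • v) (hmin : lam₁ ≤ lam i₀) (i : ι) :
    (ℝ ∙ v)ᗮ.reflection (A (b i)) = |lam i| • b i := by
  have hperp : ∀ j ≠ i₀, ⟪b j, v⟫ = 0 := fun j hj =>
    hA.inner_eq_zero_of_eigenvalue_ne (hb j) hv (by linarith [hpos j hj])
  rw [hb i, map_smul]
  by_cases hi : i = i₀
  · subst hi
    rw [Submodule.reflection_mem_subspace_orthogonal_precomplement_eq_neg
      (b.mem_span_singleton_of_inner_eq_zero hv0 hperp), abs_of_neg hneg, smul_neg, neg_smul]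
  · rw [Submodule.reflection_mem_subspace_eq_self, abs_of_pos (hpos i hi)]
    rw [Submodule.mem_orthogonal_singleton_iff_inner_right, real_inner_comm]
    exact hperp i hi

theorem OrthonormalBasis.norm_sub_smul_reflection_apply_le (hA : A.IsSymmetric)
    (hb : ∀ i, A (b i) = lam i • b i) (hneg : lam i₀ < 0) (hpos : ∀ j ≠ i₀, 0 < lam j)
    (hv0 : v ≠ 0) (hv : A v = lam₁ • v) (hmin : lam₁ ≤ lam i₀) {μ L : ℝ}
    (hμ : 0 < μ) (hμL : μ ≤ L) (hbd : ∀ i, μ ≤ |lam i| ∧ |lam i| ≤ L) (e : E) :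
    ‖e - (2 / (L + μ)) • (ℝ ∙ v)ᗮ.reflection (A e)‖ ≤ (L - μ) / (L + μ) * ‖e‖ := by
  let T : E →ₗ[ℝ] E :=
    LinearMap.id - (2 / (L + μ)) • (((ℝ ∙ v)ᗮ.reflection).toLinearMap ∘ₗ A)
  have hT : ∀ i, T (b i) = (1 - 2 / (L + μ) * |lam i|) • b i := fun i => by
    simp [T, b.reflection_apply_eq_abs_smul hA hb hneg hpos hv0 hv hmin i, sub_smul, smul_smul]
  exact b.norm_apply_le_of_apply_eq_smul hT (div_nonneg (by linarith) (by linarith))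
    (fun i => abs_one_sub_two_div_mul_le hμ (hbd i).1 (hbd i).2) e

end OrthonormalEigenbasis

theorem norm_sub_sub_fderiv_apply_le_of_lipschitz {E F : Type*} [NormedAddCommGroup E]
    [NormedSpace ℝ E] [NormedAddCommGroup F] [NormedSpace ℝ F] {g : E → F} {g' : E → E →L[ℝ] F}
    {a x : E} {M : ℝ} (hg : ∀ y ∈ segment ℝ a x, HasFDerivAt g (g' y) y)
    (hlip : ∀ y ∈ segment ℝ a x, ‖g' y - g' x‖ ≤ M * ‖y - x‖) :
    ‖g x - g a - g' x (x - a)‖ ≤ M / 2 * ‖x - a‖ ^ 2 := by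
  set e := x - a
  set r := ‖e‖
  set γ : ℝ → E := fun t => a + t • e
  have hγ : ∀ t ∈ Set.Icc (0 : ℝ) 1, γ t ∈ segment ℝ a x := by
    rw [segment_eq_image']
    exact fun t ht => ⟨t, ht, rfl⟩
  have hγ_sub : ∀ t, γ t - x = (t - 1) • e := fun t => by simp only [γ, e]; module
  -- Comparison with `B t = M r² (t - t²/2)`, whose derivative `M r² (1 - t)` bounds `‖φ' t‖`.
  set φ : ℝ → F := fun t => g (γ t) - g a - t • g' x e
  set φ' : ℝ → F := fun t => (g' (γ t) - g' x) e
  have hφ : ∀ t ∈ Set.Icc (0 : ℝ) 1, HasDerivAt φ (φ' t) t := fun t ht => by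
    have hγ' : HasDerivAt γ e t := by
      simpa only [one_smul] using ((hasDerivAt_id' t).smul_const e).const_add a
    exact ((((hg _ (hγ t ht)).comp_hasDerivAt t hγ').sub_const (g a)).sub
      ((hasDerivAt_id' t).smul_const (g' x e))).congr_deriv (by simp [φ'])
  set B : ℝ → ℝ := fun t => M * r ^ 2 * (t - t ^ 2 / 2)
  have hB : ∀ t, HasDerivAt B (M * r ^ 2 * (1 - t)) t := fun t =>
    (((hasDerivAt_id' t).sub ((hasDerivAt_pow 2 t).div_const 2)).const_mul (M * r ^ 2)).congr_deriv
      (by norm_num)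
  have hbound : ∀ t ∈ Set.Ico (0 : ℝ) 1, ‖φ' t‖ ≤ M * r ^ 2 * (1 - t) := fun t ht => calc
    ‖φ' t‖ ≤ ‖g' (γ t) - g' x‖ * r := (g' (γ t) - g' x).le_opNorm e
    _ ≤ M * ‖γ t - x‖ * r := by gcongr; exact hlip _ (hγ t (Set.Ico_subset_Icc_self ht))
    _ = M * r ^ 2 * (1 - t) := by
      rw [hγ_sub, norm_smul, Real.norm_eq_abs, abs_of_nonpos (by linarith [ht.2])]
      ring
  have key := image_norm_le_of_norm_deriv_right_le_deriv_boundary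
    (fun t ht => (hφ t ht).continuousAt.continuousWithinAt)
    (fun t ht => (hφ t (Set.Ico_subset_Icc_self ht)).hasDerivWithinAt) (by simp [φ, B, γ]) hB hbound
    (Set.right_mem_Icc.mpr zero_le_one)
  convert key using 1
  · simp [φ, γ, e]
  · simp only [B]
    ring

theorem Orthonormal.exists_orthonormalBasis_coe_eq {ι E : Type*} [Fintype ι]
    [NormedAddCommGroup E] [InnerProductSpace ℝ E] [FiniteDimensional ℝ E] {u : ι → E}
    (hu : Orthonormal ℝ u) (hcard : Fintype.card ι = Module.finrank ℝ E) :
    ∃ b : OrthonormalBasis ι ℝ E, ⇑b = u :=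
  ⟨.mk hu (hu.linearIndependent.span_eq_top_of_card_eq_finrank' hcard).ge,
    OrthonormalBasis.coe_mk _ _⟩

theorem isSymmetric_toEuclideanLin_of_isSymm {d : ℕ} {A : Matrix (Fin d) (Fin d) ℝ}
    (hA : A.IsSymm) : (Matrix.toEuclideanLin A).IsSymmetric :=
  Matrix.isSymmetric_toEuclideanLin_iff.mpr (Matrix.isHermitian_iff_isSymm.mpr hA)

theorem mulVecE_one_sub_two_smul_outer {d : ℕ} {v : EVec d} (hv : ‖v‖ = 1) (w : EVec d) :
    mulVecE (1 - (2 : ℝ) • outer v v) w = (ℝ ∙ v)ᗮ.reflection w := by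
  rw [Submodule.reflection_orthogonal_apply, Submodule.reflection_singleton_apply, hv]
  ext i
  simp [mulVecE, outer, Matrix.mulVec, dotProduct, PiLp.inner_apply, Finset.mul_sum, Finset.sum_mul]
  exact Finset.sum_congr rfl fun j _ => by ring

theorem norm_sub_mulVecE_sub_le {d : ℕ} {g : EVec d → EVec d}
    {hess : EVec d → Matrix (Fin d) (Fin d) ℝ} {xstar x : EVec d} {δ M : ℝ}
    (hg : ∀ y, HasFDerivAt g (LinearMap.toContinuousLinearMap (Matrix.toEuclideanLin (hess y))) y)
    (hgs : g xstar = 0)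
    (hlip : ∀ x y : EVec d, ‖x - xstar‖ < δ → ‖y - xstar‖ < δ →
      specNorm (hess x - hess y) ≤ M * ‖x - y‖)
    (hx : ‖x - xstar‖ < δ) :
    ‖g x - mulVecE (hess x) (x - xstar)‖ ≤ M / 2 * ‖x - xstar‖ ^ 2 := by
  have hseg : segment ℝ xstar x ⊆ Metric.ball xstar δ :=
    (convex_ball xstar δ).segment_subset (Metric.mem_ball_self ((norm_nonneg _).trans_lt hx))
      (mem_ball_iff_norm.mpr hx)
  have := norm_sub_sub_fderiv_apply_le_of_lipschitz (g := g) (fun y _ => hg y) fun y hy => by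
    simpa [specNorm, map_sub] using hlip y x (mem_ball_iff_norm.mp (hseg hy)) hx
  simpa [hgs, mulVecE] using this

/-- Theorem 4.1 (single-step estimate, exact eigenvector, index 1): under Assumption (A)
with `k = 1`, if `r = ‖x - x*‖₂ < δ`, `v₁` is a unit eigenvector of `∇²E(x)` for its
smallest eigenvalue, `β = 2/(L+μ)` and `x⁺ = x - β (I - 2 v₁ v₁ᵀ) ∇E(x)`, then
`‖x⁺ - x*‖₂ ≤ (1 - 2μ/(L+μ)) r + M r² / (L+μ)`. -/
theorem index1_exact_single_step {d : ℕ} (E : EVec d → ℝ)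
    (hess : EVec d → Matrix (Fin d) (Fin d) ℝ)
    (xstar : EVec d) (δ M μ L : ℝ)
    (hA : AssumptionA 1 E hess xstar δ M μ L)
    (x : EVec d) (hx : ‖x - xstar‖ < δ)
    (v₁ : EVec d) (hv₁ : ‖v₁‖ = 1) (lam₁ : ℝ)
    (heig : mulVecE (hess x) v₁ = lam₁ • v₁)
    (hmin : ∀ (t : ℝ) (w : EVec d), w ≠ 0 → mulVecE (hess x) w = t • w → lam₁ ≤ t)
    (β : ℝ) (hβ : β = 2 / (L + μ))
    (xplus : EVec d)
    (hstep : xplus = x - β • mulVecE (1 - (2 : ℝ) • outer v₁ v₁) (gradient E x)) :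
    ‖xplus - xstar‖ ≤
      (1 - 2 * μ / (L + μ)) * ‖x - xstar‖ + M * ‖x - xstar‖ ^ 2 / (L + μ) := by
  obtain ⟨-, hgrad, hsym, hgs, -, -, hμ, hμL, hlip, hspec⟩ := hA
  obtain ⟨u, lam, horth, heigu, -, hneg, hpos, hbd⟩ := hspec x hx
  obtain ⟨b, rfl⟩ := (orthonormal_iff_ite.mpr horth).exists_orthonormalBasis_coe_eq (by simp)
  have hv₀ : v₁ ≠ 0 := norm_ne_zero_iff.mp (by simp [hv₁])
  have hd : 0 < d := Nat.pos_of_ne_zero fun h => hv₀ (by subst h; exact Subsingleton.elim _ _)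
  set i₀ : Fin d := ⟨0, hd⟩
  set e := x - xstar with he
  set P := (ℝ ∙ v₁)ᗮ.reflection
  set H := Matrix.toEuclideanLin (hess x)
  have hcontr : ‖e - β • P (H e)‖ ≤ (L - μ) / (L + μ) * ‖e‖ := hβ ▸
    b.norm_sub_smul_reflection_apply_le (isSymmetric_toEuclideanLin_of_isSymm (hsym x)) heigu
      (hneg i₀ Nat.zero_lt_one)
      (fun j hj => hpos j (Nat.one_le_iff_ne_zero.mpr (Fin.ext_iff.not.mp hj)))
      hv₀ heig (hmin _ _ (b.orthonormal.ne_zero i₀) (heigu i₀)) hμ hμL.le hbd e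
  have hrem := norm_sub_mulVecE_sub_le hgrad hgs hlip hx
  have hs : 0 < L + μ := by linarith
  have hβ0 : 0 ≤ β := hβ ▸ div_nonneg zero_le_two hs.le
  calc ‖xplus - xstar‖ = ‖(e - β • P (H e)) - β • P (gradient E x - H e)‖ := by
        rw [hstep, mulVecE_one_sub_two_smul_outer hv₁, map_sub P, smul_sub, he]
        congr 1
        abel
    _ ≤ (L - μ) / (L + μ) * ‖e‖ + β * (M / 2 * ‖e‖ ^ 2) := by
        refine norm_sub_le_of_le hcontr ?_
        rw [norm_smul, Real.norm_of_nonneg hβ0, LinearIsometryEquiv.norm_map]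
        exact mul_le_mul_of_nonneg_left hrem hβ0
    _ = (1 - 2 * μ / (L + μ)) * ‖e‖ + M * ‖e‖ ^ 2 / (L + μ) := by
        rw [hβ]
        field_simp
        ring
end
end

section
/- Suppose E, x*, δ, M, μ, L satisfy Assumption (A) with k = 1, and let κ = L/μ, r̂ = 2μ/M, β = 2/(L+μ). Let (x^{(n)})_{n≥0} ⊂ ℝ^d be a sequence such that for each n there is a unit eigenvector v₁^{(n)} of ∇²E(x^{(n)}) corresponding to its smallest eigenvalue with x^{(n+1)} = x^{(n)} − β·(I − 2·v₁^{(n)}·(v₁^{(n)})ᵀ)·∇E(x^{(n)}). If r₀ = ‖x^{(0)} − x*‖₂ < min{δ, r̂}, then for all n ≥ 0, ‖x^{(n)} − x*‖₂ ≤ (1 − 2/(κ+3))^n · (r̂·r₀)/(r̂ − r₀); in particular x^{(n)} converges to x* as n → ∞. -/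
open Matrix Finset Filter

noncomputable section

namespace SadAux
variable {d : ℕ}

lemma mulVecE_apply (A : Matrix (Fin d) (Fin d) ℝ) (z : EVec d) (i : Fin d) :
    mulVecE A z i = ∑ j, A i j * z j := by
  simp [mulVecE, Matrix.toEuclideanLin_apply, Matrix.mulVec, dotProduct]

lemma inner_evec (x y : EVec d) : (inner ℝ x y : ℝ) = ∑ i, x i * y i := by
  simp [PiLp.inner_apply, RCLike.inner_apply, mul_comm]

lemma mulVecE_one (z : EVec d) : mulVecE 1 z = z := by
  ext i
  simp [mulVecE_apply, Matrix.one_apply]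

lemma mulVecE_outer (v w z : EVec d) :
    mulVecE (outer v w) z = (inner ℝ w z : ℝ) • v := by
  ext i
  simp only [mulVecE_apply, outer, Matrix.of_apply, PiLp.smul_apply, smul_eq_mul, inner_evec,
    Finset.sum_mul]
  exact Finset.sum_congr rfl fun j _ => by ring

lemma norm_mulVecE_le (A : Matrix (Fin d) (Fin d) ℝ) (z : EVec d) :
    ‖mulVecE A z‖ ≤ specNorm A * ‖z‖ := by
  have h := (LinearMap.toContinuousLinearMap (Matrix.toEuclideanLin A)).le_opNorm z
  simpa only [specNorm, mulVecE, LinearMap.coe_toContinuousLinearMap'] using h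

lemma norm_sum_sq (u : Fin d → EVec d)
    (hu : ∀ i j, (inner ℝ (u i) (u j) : ℝ) = if i = j then 1 else 0)
    (c : Fin d → ℝ) : ‖∑ i, c i • u i‖ ^ 2 = ∑ i, (c i) ^ 2 := by
  rw [← real_inner_self_eq_norm_sq, sum_inner]
  simp only [inner_sum, real_inner_smul_left, real_inner_smul_right, hu, mul_ite, mul_one,
    mul_zero, Finset.sum_ite_eq, Finset.mem_univ, if_true, sq]

lemma coeff_eq_inner (u : Fin d → EVec d)
    (hu : ∀ i j, (inner ℝ (u i) (u j) : ℝ) = if i = j then 1 else 0)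
    (c : Fin d → ℝ) (i : Fin d) : (inner ℝ (u i) (∑ j, c j • u j) : ℝ) = c i := by
  rw [inner_sum]
  simp only [real_inner_smul_right, hu, mul_ite, mul_one, mul_zero, Finset.sum_ite_eq,
    Finset.mem_univ, if_true]

lemma norm_sum_le' (u : Fin d → EVec d)
    (hu : ∀ i j, (inner ℝ (u i) (u j) : ℝ) = if i = j then 1 else 0)
    (a c : Fin d → ℝ) (K : ℝ) (hK : 0 ≤ K) (h : ∀ i, |a i| ≤ K * |c i|) :
    ‖∑ i, a i • u i‖ ≤ K * ‖∑ i, c i • u i‖ := by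
  have h1 := norm_sum_sq u hu a
  have h2 := norm_sum_sq u hu c
  have hsum : ∑ i, (a i) ^ 2 ≤ K ^ 2 * ∑ i, (c i) ^ 2 := by
    rw [Finset.mul_sum]
    refine Finset.sum_le_sum fun i _ => ?_
    have := h i
    nlinarith [abs_nonneg (a i), abs_nonneg (c i), sq_abs (a i), sq_abs (c i)]
  nlinarith [norm_nonneg (∑ i, a i • u i), norm_nonneg (∑ i, c i • u i),
    mul_nonneg hK (norm_nonneg (∑ i, c i • u i))]

lemma exists_repr (hd : 0 < d) (u : Fin d → EVec d)
    (hu : ∀ i j, (inner ℝ (u i) (u j) : ℝ) = if i = j then 1 else 0) (z : EVec d) :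
    ∃ c : Fin d → ℝ, z = ∑ i, c i • u i := by
  haveI : Nonempty (Fin d) := ⟨⟨0, hd⟩⟩
  have hon : Orthonormal ℝ u := orthonormal_iff_ite.mpr hu
  have hcard : Fintype.card (Fin d) = Module.finrank ℝ (EVec d) := by
    simp [finrank_euclideanSpace_fin]
  let b := basisOfLinearIndependentOfCardEqFinrank hon.linearIndependent hcard
  refine ⟨fun i => b.repr z i, ?_⟩
  have hb : ⇑b = u := coe_basisOfLinearIndependentOfCardEqFinrank _ _
  conv_lhs => rw [← b.sum_repr z]
  simp [hb]

lemma inner_mulVecE_symm (A : Matrix (Fin d) (Fin d) ℝ) (hA : A.IsSymm) (a b : EVec d) :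
    (inner ℝ (mulVecE A a) b : ℝ) = inner ℝ a (mulVecE A b) := by
  simp only [inner_evec, mulVecE_apply, Finset.sum_mul, Finset.mul_sum]
  rw [Finset.sum_comm]
  refine Finset.sum_congr rfl fun j _ => Finset.sum_congr rfl fun i _ => ?_
  have : A i j = A j i := by
    conv_lhs => rw [← hA]
    exact Matrix.transpose_apply A i j
  rw [this]; ring

lemma reflect_norm (v z : EVec d) (hv : ‖v‖ = 1) :
    ‖z - (2 * inner ℝ v z : ℝ) • v‖ = ‖z‖ := by
  set c : ℝ := inner ℝ v z with hc
  have h1 : ‖z - (2 * c) • v‖ ^ 2 = ‖z‖ ^ 2 := by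
    rw [norm_sub_sq_real, real_inner_smul_right, norm_smul, hv, mul_one]
    have hzv : (inner ℝ z v : ℝ) = c := by rw [hc]; exact real_inner_comm v z
    rw [hzv, Real.norm_eq_abs, sq_abs]
    ring
  calc ‖z - (2 * c) • v‖ = Real.sqrt (‖z - (2*c) • v‖ ^ 2) := (Real.sqrt_sq (norm_nonneg _)).symm
    _ = Real.sqrt (‖z‖ ^ 2) := by rw [h1]
    _ = ‖z‖ := Real.sqrt_sq (norm_nonneg _)

/-- Taylor estimate with Lipschitz Hessian. -/
lemma taylor_grad (E : EVec d → ℝ) (hess : EVec d → Matrix (Fin d) (Fin d) ℝ)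
    (xstar : EVec d) (δ M : ℝ)
    (hgrad : ∀ y, HasFDerivAt (gradient E)
      (LinearMap.toContinuousLinearMap (Matrix.toEuclideanLin (hess y))) y)
    (hstar : gradient E xstar = 0)
    (hlip : ∀ x y : EVec d, ‖x - xstar‖ < δ → ‖y - xstar‖ < δ →
      specNorm (hess x - hess y) ≤ M * ‖x - y‖)
    (x : EVec d) (hx : ‖x - xstar‖ < δ) :
    ‖gradient E x - mulVecE (hess x) (x - xstar)‖ ≤ M / 2 * ‖x - xstar‖ ^ 2 := by
  set e : EVec d := x - xstar with he
  set He : EVec d := mulVecE (hess x) e with hHe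
  set f : ℝ → EVec d := fun t => gradient E (xstar + t • e) - t • He with hf
  set B : ℝ → ℝ := fun t => M * ‖e‖ ^ 2 * (t - t ^ 2 / 2) with hB
  have hγ : ∀ t : ℝ, HasDerivAt (fun s : ℝ => xstar + s • e) e t := by
    intro t
    simpa using ((hasDerivAt_id t).smul_const e).const_add xstar
  have hfd : ∀ t : ℝ, HasDerivAt f (mulVecE (hess (xstar + t • e)) e - He) t := by
    intro t
    have h1 : HasDerivAt (fun s : ℝ => gradient E (xstar + s • e))
        (mulVecE (hess (xstar + t • e)) e) t := by
      have := (hgrad (xstar + t • e)).comp_hasDerivAt t (hγ t)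
      exact this
    have h2 : HasDerivAt (fun s : ℝ => s • He) He t := by
      simpa using (hasDerivAt_id t).smul_const He
    exact h1.sub h2
  have hBd : ∀ t : ℝ, HasDerivAt B (M * ‖e‖ ^ 2 * (1 - t)) t := by
    intro t
    have h1 : HasDerivAt (fun s : ℝ => s - s ^ 2 / 2) (1 - t) t := by
      have := ((hasDerivAt_id t).sub ((hasDerivAt_pow 2 t).div_const 2))
      simp at this
      exact this
    exact h1.const_mul (M * ‖e‖ ^ 2)
  have hbound : ∀ t ∈ Set.Ico (0:ℝ) 1, ‖mulVecE (hess (xstar + t • e)) e - He‖ ≤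
      M * ‖e‖ ^ 2 * (1 - t) := by
    intro t ht
    have hts : ‖(xstar + t • e) - xstar‖ < δ := by
      have h1 : |t| * ‖e‖ ≤ ‖e‖ := by
        have : |t| ≤ 1 := by rw [abs_of_nonneg ht.1]; exact le_of_lt ht.2
        nlinarith [norm_nonneg e]
      calc ‖(xstar + t • e) - xstar‖ = ‖t • e‖ := by congr 1; abel
        _ ≤ ‖e‖ := by rw [norm_smul] at *; exact h1
        _ < δ := by simpa [he] using hx
    have hdiff : mulVecE (hess (xstar + t • e)) e - He
        = mulVecE (hess (xstar + t • e) - hess x) e := by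
      simp [mulVecE, hHe, map_sub]
    rw [hdiff]
    have h1 := norm_mulVecE_le (hess (xstar + t • e) - hess x) e
    have h2 := hlip (xstar + t • e) x hts hx
    have h3 : ‖(xstar + t • e) - x‖ = (1 - t) * ‖e‖ := by
      have h4 : (xstar + t • e) - x = (t - 1) • e := by
        rw [he]; module
      rw [h4, norm_smul]
      have : |t - 1| = 1 - t := by rw [abs_of_nonpos (by linarith [ht.2])]; ring
      simp [this]
    have hM2 : specNorm (hess (xstar + t • e) - hess x) ≤ M * ((1 - t) * ‖e‖) := by
      rw [← h3]; exact h2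
    calc ‖mulVecE (hess (xstar + t • e) - hess x) e‖
        ≤ specNorm (hess (xstar + t • e) - hess x) * ‖e‖ := h1
      _ ≤ M * ((1 - t) * ‖e‖) * ‖e‖ := by
          apply mul_le_mul_of_nonneg_right hM2 (norm_nonneg e)
      _ = M * ‖e‖ ^ 2 * (1 - t) := by ring
  have key := image_norm_le_of_norm_deriv_right_le_deriv_boundary
    (f := f) (f' := fun t => mulVecE (hess (xstar + t • e)) e - He)
    (a := 0) (b := 1)
    (fun t _ => (hfd t).continuousAt.continuousWithinAt)
    (fun t _ => (hfd t).hasDerivWithinAt.mono (by intro s hs; exact hs))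
    (B := B) (B' := fun t => M * ‖e‖ ^ 2 * (1 - t))
    (by simp [hf, hB, hstar])
    (fun t => hBd t)
    (fun t ht => hbound t ht)
  have h1 : ‖f 1‖ ≤ B 1 := key (Set.mem_Icc.mpr ⟨zero_le_one, le_refl 1⟩)
  have hf1 : f 1 = gradient E x - He := by
    simp [hf, he]
  rw [hf1] at h1
  calc ‖gradient E x - He‖ ≤ B 1 := h1
    _ = M / 2 * ‖e‖ ^ 2 := by rw [hB]; ring

lemma recur_step (L μ M r r' : ℝ) (hμ : 0 < μ) (hμL : μ < L) (hM : 0 < M)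
    (hr0 : 0 ≤ r) (hr'0 : 0 ≤ r') (hrh : r < 2*μ/M)
    (hb : r' * (L+μ) ≤ (L-μ)*r + M*r^2) :
    r' ≤ r ∧ (2*μ/M) * r' / ((2*μ/M) - r') ≤
      (L+μ)/(L+3*μ) * ((2*μ/M) * r / ((2*μ/M) - r)) := by
  have hA : (0:ℝ) < L + μ := by linarith
  have hB : (0:ℝ) < L + 3*μ := by linarith
  have hMne : M ≠ 0 := ne_of_gt hM
  have hMr : M * r < 2*μ := by
    rw [lt_div_iff₀ hM] at hrh; linarith
  have h1 : r' ≤ r := by nlinarith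
  refine ⟨h1, ?_⟩
  have hMr' : M * r' < 2*μ := by nlinarith
  have hpos1 : (0:ℝ) < 2*μ/M - r := by rw [sub_pos]; exact hrh
  have hpos2 : (0:ℝ) < 2*μ/M - r' := by rw [sub_pos]; exact lt_of_le_of_lt h1 hrh
  rw [div_mul_div_comm, div_le_div_iff₀ hpos2 (by positivity)]
  have hM2 : (0:ℝ) < M^2 := by positivity
  refine (mul_le_mul_iff_of_pos_left hM2).mp ?_
  have e1 : M^2 * ((2*μ/M) * r' * ((L+3*μ) * ((2*μ/M) - r)))
      = (2*μ) * r' * ((L+3*μ) * ((2*μ) - M*r)) := by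
    field_simp
  have e2 : M^2 * ((L+μ) * ((2*μ/M) * r) * ((2*μ/M) - r'))
      = (L+μ) * ((2*μ) * r) * ((2*μ) - M*r') := by
    field_simp
  rw [e1, e2]
  have ht1 : (0:ℝ) ≤ (((L-μ)*r + M*r^2) - r'*(L+μ)) * ((2*μ - M*r)*(L+3*μ)) := by
    apply mul_nonneg (by linarith) (by nlinarith)
  have ht2 : (0:ℝ) ≤ (((L-μ)*r + M*r^2) - r'*(L+μ)) * (M*r*(L+μ)) := by
    apply mul_nonneg (by linarith) (by positivity)
  have ht3 : (0:ℝ) ≤ 2*μ*r*(2*μ - M*r)^2 := by positivity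
  have hkey : (L+μ) * ((L+μ) * ((2*μ) * r) * ((2*μ) - M*r') - (2*μ) * r' * ((L+3*μ) * ((2*μ) - M*r)))
      = 2*μ*((((L-μ)*r + M*r^2) - r'*(L+μ)) * ((2*μ - M*r)*(L+3*μ))
        + (((L-μ)*r + M*r^2) - r'*(L+μ)) * (M*r*(L+μ)) + 2*μ*r*(2*μ - M*r)^2) := by
    ring
  nlinarith [hkey, ht1, ht2, ht3, hA, hμ]

lemma abs_one_sub_beta (μ L β t : ℝ) (hμ : 0 < μ) (hμL : μ < L) (hβ : β = 2 / (L + μ))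
    (ht1 : μ ≤ t) (ht2 : t ≤ L) : |1 - β * t| ≤ (L - μ) / (L + μ) := by
  have hA : (0:ℝ) < L + μ := by linarith
  have h1 : 1 - β * t = (L + μ - 2*t) / (L + μ) := by
    rw [hβ]; field_simp
  rw [h1, abs_div, abs_of_pos hA]
  exact (div_le_div_iff_of_pos_right hA).mpr (abs_le.mpr ⟨by linarith, by linarith⟩)

lemma contract [NeZero d] (u : Fin d → EVec d)
    (hu : ∀ i j, (inner ℝ (u i) (u j) : ℝ) = if i = j then 1 else 0)
    (H : Matrix (Fin d) (Fin d) ℝ) (lam : Fin d → ℝ)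
    (heig : ∀ i, mulVecE H (u i) = lam i • u i)
    (μ L β : ℝ) (hμ : 0 < μ) (hμL : μ < L) (hβ : β = 2 / (L + μ))
    (hlam0a : -L ≤ lam 0) (hlam0b : lam 0 ≤ -μ)
    (hlami : ∀ i : Fin d, i ≠ 0 → μ ≤ lam i ∧ lam i ≤ L)
    (c : Fin d → ℝ) :
    ‖(∑ i, c i • u i) - β • (mulVecE H (∑ i, c i • u i)
      - (2 * (inner ℝ (u 0) (mulVecE H (∑ i, c i • u i)) : ℝ)) • u 0)‖
      ≤ (L - μ) / (L + μ) * ‖∑ i, c i • u i‖ := by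
  have hA : (0:ℝ) < L + μ := by linarith
  have hHz : mulVecE H (∑ i, c i • u i) = ∑ i, (c i * lam i) • u i := by
    have h : mulVecE H (∑ i, c i • u i) = ∑ i, c i • mulVecE H (u i) := by
      simp [mulVecE, map_sum, _root_.map_smul]
    rw [h]
    exact Finset.sum_congr rfl fun i _ => by rw [heig i, smul_smul]
  have hinner : (inner ℝ (u 0) (mulVecE H (∑ i, c i • u i)) : ℝ) = c 0 * lam 0 := by
    rw [hHz]; exact coeff_eq_inner u hu _ 0
  set a : Fin d → ℝ := fun i => if i = 0 then (1 + β * lam 0) * c 0 else (1 - β * lam i) * c i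
    with ha
  have hvec : (∑ i, c i • u i) - β • (mulVecE H (∑ i, c i • u i)
      - (2 * (inner ℝ (u 0) (mulVecE H (∑ i, c i • u i)) : ℝ)) • u 0) = ∑ i, a i • u i := by
    rw [hinner, hHz]
    have h0 : (2 * (c 0 * lam 0)) • u 0
        = ∑ i, (if i = 0 then 2 * (c 0 * lam 0) else (0:ℝ)) • u i := by
      symm
      rw [Finset.sum_eq_single (0 : Fin d)]
      · simp
      · intro i _ hi; simp [hi]
      · intro h; exact absurd (Finset.mem_univ _) h
    rw [h0, ← Finset.sum_sub_distrib, Finset.smul_sum, ← Finset.sum_sub_distrib]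
    refine Finset.sum_congr rfl fun i _ => ?_
    by_cases hi : i = 0
    · subst hi
      simp only [ha, eq_self_iff_true, if_true]
      module
    · simp only [ha, if_neg hi]
      module
  rw [hvec]
  refine norm_sum_le' u hu a c ((L - μ)/(L + μ)) (div_nonneg (by linarith) (by linarith))
    fun i => ?_
  by_cases hi : i = 0
  · subst hi
    simp only [ha, if_pos rfl, abs_mul]
    apply mul_le_mul_of_nonneg_right ?_ (abs_nonneg (c 0))
    have h : 1 + β * lam 0 = 1 - β * (-(lam 0)) := by ring
    rw [h]
    exact abs_one_sub_beta μ L β (-(lam 0)) hμ hμL hβ (by linarith) (by linarith)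
  · simp only [ha, if_neg hi, abs_mul]
    apply mul_le_mul_of_nonneg_right ?_ (abs_nonneg (c i))
    exact abs_one_sub_beta μ L β (lam i) hμ hμL hβ (hlami i hi).1 (hlami i hi).2

end SadAux
set_option maxHeartbeats 1000000 in
/-- Theorem 4.2 (convergence, exact eigenvector, index 1): under Assumption (A) with
`k = 1`, with `κ = L/μ`, `r̂ = 2μ/M`, `β = 2/(L+μ)`, if the iteration uses in each step
a unit eigenvector of the smallest eigenvalue of `∇²E(x⁽ⁿ⁾)` and
`r₀ = ‖x⁽⁰⁾ - x*‖₂ < min {δ, r̂}`, then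
`‖x⁽ⁿ⁾ - x*‖₂ ≤ (1 - 2/(κ+3))ⁿ r̂ r₀ / (r̂ - r₀)` for all `n`, and `x⁽ⁿ⁾ → x*`. -/
theorem index1_exact_convergence {d : ℕ} (E : EVec d → ℝ)
    (hess : EVec d → Matrix (Fin d) (Fin d) ℝ)
    (xstar : EVec d) (δ M μ L : ℝ)
    (hA : AssumptionA 1 E hess xstar δ M μ L)
    (κ rhat β : ℝ) (hκ : κ = L / μ) (hrhat : rhat = 2 * μ / M) (hβ : β = 2 / (L + μ))
    (x : ℕ → EVec d)
    (hstep : ∀ n : ℕ, ∃ (v₁ : EVec d) (lam₁ : ℝ),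
      ‖v₁‖ = 1 ∧
      mulVecE (hess (x n)) v₁ = lam₁ • v₁ ∧
      (∀ (t : ℝ) (w : EVec d), w ≠ 0 → mulVecE (hess (x n)) w = t • w → lam₁ ≤ t) ∧
      x (n + 1) = x n - β • mulVecE (1 - (2 : ℝ) • outer v₁ v₁) (gradient E (x n)))
    (h0 : ‖x 0 - xstar‖ < min δ rhat) :
    (∀ n : ℕ, ‖x n - xstar‖ ≤
      (1 - 2 / (κ + 3)) ^ n * (rhat * ‖x 0 - xstar‖ / (rhat - ‖x 0 - xstar‖))) ∧
    Tendsto x atTop (nhds xstar) := by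
  obtain ⟨hC2, hgrad, hsymm, hstar, hδ, hM, hμ, hμL, hlip, heigs⟩ := hA
  -- the case d = 0 is impossible thanks to the unit eigenvector
  rcases Nat.eq_zero_or_pos d with hd0 | hd
  · exfalso
    obtain ⟨v₁, lam₁, hv₁, -⟩ := hstep 0
    have hz : ‖v₁‖ = 0 := by
      subst hd0
      rw [EuclideanSpace.norm_eq]
      simp
    rw [hv₁] at hz
    exact one_ne_zero hz
  haveI : NeZero d := ⟨hd.ne'⟩
  have hLμ : (0:ℝ) < L + μ := by linarith
  have hL3μ : (0:ℝ) < L + 3*μ := by linarith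
  -- the contraction rate
  have hρeq : 1 - 2 / (κ + 3) = (L + μ) / (L + 3*μ) := by
    rw [hκ]
    have hμ0 : μ ≠ 0 := ne_of_gt hμ
    have h1 : L / μ + 3 = (L + 3*μ) / μ := by field_simp
    rw [h1, div_div_eq_mul_div]
    rw [eq_div_iff hL3μ.ne', sub_mul, div_mul_cancel₀ _ hL3μ.ne']; ring
  have hρ0 : 0 ≤ 1 - 2 / (κ + 3) := by rw [hρeq]; positivity
  have hρ1 : 1 - 2 / (κ + 3) < 1 := by
    rw [hρeq, div_lt_one hL3μ]
    linarith
  -- one step estimate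
  have key : ∀ n : ℕ, ‖x n - xstar‖ < δ →
      ‖x (n+1) - xstar‖ * (L + μ) ≤ (L - μ) * ‖x n - xstar‖ + M * ‖x n - xstar‖ ^ 2 := by
    intro n hδn
    obtain ⟨u, lam, hu, heig, hmono, hneg, hpos, hbnd⟩ := heigs (x n) hδn
    obtain ⟨v₁, lam₁, hv1n, hv1e, hmin, hxs⟩ := hstep n
    have hune : ∀ i, u i ≠ 0 := by
      intro i h
      have h2 := hu i i
      rw [h] at h2
      simp at h2
    have hu0n : ‖u 0‖ = 1 := by
      have h2 : (inner ℝ (u 0) (u 0) : ℝ) = 1 := by simpa using hu 0 0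
      have h3 : ‖u 0‖ ^ 2 = 1 := by rw [← real_inner_self_eq_norm_sq, h2]
      nlinarith [norm_nonneg (u 0)]
    have hl0 : lam 0 < 0 := hneg 0 (by simp)
    have hl0b := hbnd 0
    rw [abs_of_neg hl0] at hl0b
    have hlam0a : -L ≤ lam 0 := by linarith [hl0b.2]
    have hlam0b : lam 0 ≤ -μ := by linarith [hl0b.1]
    have hlami : ∀ i : Fin d, i ≠ 0 → μ ≤ lam i ∧ lam i ≤ L := by
      intro i hi
      have hiv : 1 ≤ (i : ℕ) := Nat.one_le_iff_ne_zero.mpr (Fin.val_ne_zero_iff.mpr hi)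
      have hp := hpos i hiv
      have hb2 := hbnd i
      rw [abs_of_pos hp] at hb2
      exact hb2
    have hmin' : ∀ i, lam₁ ≤ lam i := fun i => hmin (lam i) (u i) (hune i) (heig i)
    -- v₁ is (up to sign) u 0
    obtain ⟨cc, hccv⟩ := SadAux.exists_repr hd u hu v₁
    have hccinner : ∀ i, (inner ℝ (u i) v₁ : ℝ) = cc i := fun i => by
      rw [hccv]; exact SadAux.coeff_eq_inner u hu cc i
    have hcc0 : ∀ i : Fin d, i ≠ 0 → cc i = 0 := by
      intro i hi
      have h1 : (inner ℝ (u i) (mulVecE (hess (x n)) v₁) : ℝ) = lam₁ * cc i := by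
        rw [hv1e, real_inner_smul_right, hccinner]
      have h2 : (inner ℝ (u i) (mulVecE (hess (x n)) v₁) : ℝ) = lam i * cc i := by
        rw [← SadAux.inner_mulVecE_symm (hess (x n)) (hsymm (x n)) (u i) v₁, heig i,
          real_inner_smul_left, hccinner]
      have hlt : lam₁ < lam i := by
        have := hmin' 0
        have := (hlami i hi).1
        linarith
      have h3 : (lam₁ - lam i) * cc i = 0 := by
        have h4 := h1.symm.trans h2
        linarith [h4, mul_comm (lam₁ - lam i) (cc i)]
      rcases mul_eq_zero.mp h3 with h | h
      · exact absurd h (sub_ne_zero.mpr (ne_of_lt hlt))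
      · exact h
    have hv1u : v₁ = cc 0 • u 0 := by
      rw [hccv, Finset.sum_eq_single (0 : Fin d)]
      · intro i _ hi; rw [hcc0 i hi, zero_smul]
      · intro h; exact absurd (Finset.mem_univ _) h
    have hcc0sq : cc 0 ^ 2 = 1 := by
      have h1 : ‖v₁‖ = |cc 0| * ‖u 0‖ := by
        rw [hv1u, norm_smul]; rfl
      rw [hu0n, mul_one, hv1n] at h1
      nlinarith [sq_abs (cc 0)]
    have houter : outer v₁ v₁ = outer (u 0) (u 0) := by
      ext i j
      simp only [outer, Matrix.of_apply, hv1u, PiLp.smul_apply, smul_eq_mul]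
      have h1 : cc 0 * u 0 i * (cc 0 * u 0 j) = (cc 0 ^ 2) * (u 0 i * u 0 j) := by ring
      rw [h1, hcc0sq, one_mul]
    -- rewrite the reflected gradient
    have hPg : mulVecE (1 - (2:ℝ) • outer v₁ v₁) (gradient E (x n))
        = gradient E (x n) - (2 * (inner ℝ (u 0) (gradient E (x n)) : ℝ)) • u 0 := by
      rw [houter]
      have h1 : mulVecE (1 - (2:ℝ) • outer (u 0) (u 0)) (gradient E (x n))
          = mulVecE 1 (gradient E (x n))
            - (2:ℝ) • mulVecE (outer (u 0) (u 0)) (gradient E (x n)) := by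
        simp [mulVecE, map_sub, _root_.map_smul]
      rw [h1, SadAux.mulVecE_one, SadAux.mulVecE_outer, smul_smul]
    -- decompose the step
    have hxdiff : x (n+1) - xstar
        = ((x n - xstar) - β • (mulVecE (hess (x n)) (x n - xstar)
            - (2 * (inner ℝ (u 0) (mulVecE (hess (x n)) (x n - xstar)) : ℝ)) • u 0))
          - β • ((gradient E (x n) - mulVecE (hess (x n)) (x n - xstar))
            - (2 * (inner ℝ (u 0)
                (gradient E (x n) - mulVecE (hess (x n)) (x n - xstar)) : ℝ)) • u 0) := by
      rw [hxs, hPg]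
      have hsplit : (inner ℝ (u 0) (gradient E (x n)) : ℝ)
          = inner ℝ (u 0) (mulVecE (hess (x n)) (x n - xstar))
            + inner ℝ (u 0) (gradient E (x n) - mulVecE (hess (x n)) (x n - xstar)) := by
        rw [← inner_add_right]
        congr 1
        abel
      rw [hsplit]
      module
    -- contraction bound
    obtain ⟨ce, hce⟩ := SadAux.exists_repr hd u hu (x n - xstar)
    have hcontract := SadAux.contract u hu (hess (x n)) lam heig μ L β hμ hμL hβ
      hlam0a hlam0b hlami ce
    rw [← hce] at hcontract
    -- Taylor bound
    have htay := SadAux.taylor_grad E hess xstar δ M hgrad hstar hlip (x n) hδn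
    -- reflection isometry
    have hrefl := SadAux.reflect_norm (u 0)
      (gradient E (x n) - mulVecE (hess (x n)) (x n - xstar)) hu0n
    have hβpos : 0 < β := by rw [hβ]; positivity
    have hbound : ‖x (n+1) - xstar‖
        ≤ (L - μ)/(L + μ) * ‖x n - xstar‖ + β * (M / 2 * ‖x n - xstar‖ ^ 2) := by
      rw [hxdiff]
      refine le_trans (norm_sub_le _ _) ?_
      rw [norm_smul, Real.norm_eq_abs, abs_of_pos hβpos, hrefl]
      exact add_le_add hcontract (mul_le_mul_of_nonneg_left htay hβpos.le)
    have heq : ((L - μ)/(L + μ) * ‖x n - xstar‖ + β * (M / 2 * ‖x n - xstar‖ ^ 2)) * (L + μ)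
        = (L - μ) * ‖x n - xstar‖ + M * ‖x n - xstar‖ ^ 2 := by
      rw [hβ]; field_simp
    calc ‖x (n+1) - xstar‖ * (L + μ)
        ≤ ((L - μ)/(L + μ) * ‖x n - xstar‖ + β * (M / 2 * ‖x n - xstar‖ ^ 2)) * (L + μ) :=
          mul_le_mul_of_nonneg_right hbound hLμ.le
      _ = (L - μ) * ‖x n - xstar‖ + M * ‖x n - xstar‖ ^ 2 := heq
  -- the invariant
  have hrhatpos : 0 < rhat := by rw [hrhat]; positivity
  have inv : ∀ n : ℕ, ‖x n - xstar‖ < min δ rhat ∧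
      rhat * ‖x n - xstar‖ / (rhat - ‖x n - xstar‖)
        ≤ (1 - 2 / (κ + 3)) ^ n * (rhat * ‖x 0 - xstar‖ / (rhat - ‖x 0 - xstar‖)) := by
    intro n
    induction n with
    | zero => exact ⟨h0, by simp⟩
    | succ n ih =>
      obtain ⟨ih1, ih2⟩ := ih
      have hδn : ‖x n - xstar‖ < δ := lt_of_lt_of_le ih1 (min_le_left _ _)
      have hrn : ‖x n - xstar‖ < rhat := lt_of_lt_of_le ih1 (min_le_right _ _)
      have hrn' : ‖x n - xstar‖ < 2*μ/M := by rw [← hrhat]; exact hrn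
      have hkeyn := key n hδn
      have hrec := SadAux.recur_step L μ M (‖x n - xstar‖) (‖x (n+1) - xstar‖) hμ hμL hM
        (norm_nonneg _) (norm_nonneg _) hrn' hkeyn
      refine ⟨lt_of_le_of_lt hrec.1 ih1, ?_⟩
      have hstep2 : rhat * ‖x (n+1) - xstar‖ / (rhat - ‖x (n+1) - xstar‖)
          ≤ (1 - 2 / (κ + 3)) * (rhat * ‖x n - xstar‖ / (rhat - ‖x n - xstar‖)) := by
        rw [hρeq, hrhat]
        exact hrec.2
      calc rhat * ‖x (n+1) - xstar‖ / (rhat - ‖x (n+1) - xstar‖)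
          ≤ (1 - 2 / (κ + 3)) * (rhat * ‖x n - xstar‖ / (rhat - ‖x n - xstar‖)) := hstep2
        _ ≤ (1 - 2 / (κ + 3)) * ((1 - 2 / (κ + 3)) ^ n * (rhat * ‖x 0 - xstar‖ / (rhat - ‖x 0 - xstar‖))) :=
            mul_le_mul_of_nonneg_left ih2 hρ0
        _ = (1 - 2 / (κ + 3)) ^ (n+1) * (rhat * ‖x 0 - xstar‖ / (rhat - ‖x 0 - xstar‖)) := by ring
  have hboundall : ∀ n : ℕ, ‖x n - xstar‖
      ≤ (1 - 2 / (κ + 3)) ^ n * (rhat * ‖x 0 - xstar‖ / (rhat - ‖x 0 - xstar‖)) := by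
    intro n
    obtain ⟨h1, h2⟩ := inv n
    have hrn : ‖x n - xstar‖ < rhat := lt_of_lt_of_le h1 (min_le_right _ _)
    have hpos : 0 < rhat - ‖x n - xstar‖ := by linarith
    have h3 : ‖x n - xstar‖ ≤ rhat * ‖x n - xstar‖ / (rhat - ‖x n - xstar‖) := by
      rw [le_div_iff₀ hpos]
      nlinarith [norm_nonneg (x n - xstar)]
    exact le_trans h3 h2
  refine ⟨hboundall, ?_⟩
  rw [tendsto_iff_norm_sub_tendsto_zero]
  have hlim : Tendsto (fun n : ℕ => (1 - 2 / (κ + 3)) ^ n * (rhat * ‖x 0 - xstar‖ / (rhat - ‖x 0 - xstar‖)))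
      atTop (nhds 0) := by
    have := (tendsto_pow_atTop_nhds_zero_of_lt_one hρ0 hρ1).mul_const
      (rhat * ‖x 0 - xstar‖ / (rhat - ‖x 0 - xstar‖))
    simpa using this
  exact squeeze_zero (fun n => norm_nonneg _) hboundall hlim
end
end

section
/- Let H be a symmetric d×d real matrix whose eigenvalues λ₁ ≤ λ₂ ≤ … ≤ λ_d satisfy λ₁ < 0 < λ₂ and μ ≤ |λ_i| ≤ L for all i, with 0 < μ < L. Let v₁ be a unit eigenvector of H for λ₁, let 0 < α < 1/2, and let v̂ be a unit vector with (v₁ᵀv̂)² ≥ 1−α. Then for β = 2/(L + (1−2α)μ), the matrix Q = I − β·(I − 2·v̂·v̂ᵀ)·H satisfies ‖Q‖₂ ≤ (L − (1−2α)μ)/(L + (1−2α)μ) + 4L(α + √α)/(L + (1−2α)μ). -/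
open Matrix Finset Filter

noncomputable section

lemma sqle {r s : ℝ} (hr : 0 ≤ r) (hs : 0 ≤ s) (h : r^2 ≤ s^2) : r ≤ s := by nlinarith

lemma mulVecE_apply {d : ℕ} (A : Matrix (Fin d) (Fin d) ℝ) (x : EVec d) (i : Fin d) :
    mulVecE A x i = ∑ j, A i j * x j := by
  simp [mulVecE, Matrix.toEuclideanLin_apply, Matrix.mulVec, dotProduct]

lemma mulVecE_sub {d : ℕ} (A B : Matrix (Fin d) (Fin d) ℝ) (x : EVec d) :
    mulVecE (A - B) x = mulVecE A x - mulVecE B x := by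
  simp [mulVecE, map_sub]

lemma mulVecE_smulM {d : ℕ} (c : ℝ) (A : Matrix (Fin d) (Fin d) ℝ) (x : EVec d) :
    mulVecE (c • A) x = c • mulVecE A x := by
  simp [mulVecE, _root_.map_smul]

lemma mulVecE_one {d : ℕ} (x : EVec d) : mulVecE 1 x = x := by
  apply PiLp.ext; intro i
  simp [mulVecE_apply, Matrix.one_apply]

lemma mulVecE_mul {d : ℕ} (A B : Matrix (Fin d) (Fin d) ℝ) (x : EVec d) :
    mulVecE (A * B) x = mulVecE A (mulVecE B x) := by
  apply PiLp.ext; intro i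
  simp only [mulVecE_apply, Matrix.mul_apply, Finset.sum_mul, Finset.mul_sum]
  rw [Finset.sum_comm]
  congr 1; ext j; congr 1; ext k; ring

lemma mulVecE_outer {d : ℕ} (v w x : EVec d) :
    mulVecE (outer v w) x = (inner ℝ w x : ℝ) • v := by
  apply PiLp.ext; intro i
  simp only [mulVecE_apply, outer, Matrix.of_apply, PiLp.smul_apply, smul_eq_mul,
    PiLp.inner_apply, RCLike.inner_apply, conj_trivial]
  rw [Finset.sum_mul]
  congr 1; ext j; ring

lemma mulVecE_symm_adj {d : ℕ} (H : Matrix (Fin d) (Fin d) ℝ) (hH : H.IsSymm) (x y : EVec d) :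
    (inner ℝ (mulVecE H x) y : ℝ) = inner ℝ x (mulVecE H y) := by
  simp only [PiLp.inner_apply, RCLike.inner_apply, conj_trivial, mulVecE,
    Matrix.toEuclideanLin_apply]
  show ∑ i, y i * (H *ᵥ ⇑(WithLp.equiv 2 (Fin d → ℝ)) x) i
      = ∑ i, (H *ᵥ ⇑(WithLp.equiv 2 (Fin d → ℝ)) y) i * x i
  simp only [Matrix.mulVec, dotProduct, Finset.sum_mul, Finset.mul_sum]
  rw [Finset.sum_comm]
  refine Finset.sum_congr rfl fun i _ => Finset.sum_congr rfl fun j _ => ?_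
  have h2 : H j i = H i j := hH.apply i j
  show y j * (H j i * x i) = H i j * y j * x i
  rw [h2]; ring

lemma proj_diff_bound {E : Type*} [NormedAddCommGroup E] [InnerProductSpace ℝ E]
    (v₁ vhat : E) (hv₁ : ‖v₁‖ = 1) (hvhat : ‖vhat‖ = 1) (y : E) :
    ‖(inner ℝ vhat y : ℝ) • vhat - (inner ℝ v₁ y : ℝ) • v₁‖ ≤
      Real.sqrt (1 - (inner ℝ v₁ vhat : ℝ)^2) * ‖y‖ := by
  obtain ⟨c, hc⟩ : ∃ c : ℝ, c = inner ℝ v₁ vhat := ⟨_, rfl⟩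
  obtain ⟨a, ha⟩ : ∃ a : ℝ, a = inner ℝ v₁ y := ⟨_, rfl⟩
  obtain ⟨b, hb⟩ : ∃ b : ℝ, b = inner ℝ vhat y := ⟨_, rfl⟩
  rw [← hc, ← ha, ← hb]
  have hvv : (inner ℝ vhat vhat : ℝ) = 1 := by
    rw [real_inner_self_eq_norm_sq, hvhat]; norm_num
  have hcomm : (inner ℝ vhat v₁ : ℝ) = c := by rw [hc]; exact real_inner_comm _ _
  set p : E := v₁ - c • vhat with hp
  obtain ⟨t, ht⟩ : ∃ t : ℝ, t = inner ℝ p y := ⟨_, rfl⟩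
  have hpv : (inner ℝ vhat p : ℝ) = 0 := by
    rw [hp, inner_sub_right, inner_smul_right, hvv, mul_one, hcomm, sub_self]
  have hc2 : c^2 ≤ 1 := by
    have h1 := abs_real_inner_le_norm v₁ vhat
    rw [hv₁, hvhat, ← hc] at h1
    nlinarith [sq_abs c, mul_self_le_mul_self (abs_nonneg c) h1, sq_abs c]
  have hp2 : ‖p‖^2 = 1 - c^2 := by
    rw [hp, @norm_sub_sq_real, hv₁, inner_smul_right, ← hc, norm_smul, hvhat]
    simp [Real.norm_eq_abs, sq_abs]; ring
  have hat : a = t + c * b := by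
    rw [ht, hp, inner_sub_left, inner_smul_left, conj_trivial, ← ha, ← hb]; ring
  set y' : E := y - b • vhat with hy'
  have hpy' : (inner ℝ p y' : ℝ) = t := by
    rw [hy', inner_sub_right, inner_smul_right, real_inner_comm vhat p, hpv, ← ht]; ring
  have hy'2 : ‖y'‖^2 = ‖y‖^2 - b^2 := by
    rw [hy', @norm_sub_sq_real, inner_smul_right, real_inner_comm vhat y, ← hb, norm_smul, hvhat]
    simp [Real.norm_eq_abs, sq_abs]; ring
  have hcs : t^2 ≤ (1 - c^2) * (‖y‖^2 - b^2) := by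
    have h1 := abs_real_inner_le_norm p y'
    have h2 : t^2 ≤ ‖p‖^2 * ‖y'‖^2 := by
      rw [← hpy']
      nlinarith [mul_self_le_mul_self (abs_nonneg (inner ℝ p y' : ℝ)) h1,
        sq_abs (inner ℝ p y' : ℝ)]
    rwa [hp2, hy'2] at h2
  have hkey : b^2 - 2*c*a*b + a^2 ≤ (1 - c^2) * ‖y‖^2 := by
    rw [hat]; nlinarith [hcs]
  have hlhs : ‖b • vhat - a • v₁‖^2 = b^2 - 2*c*a*b + a^2 := by
    rw [@norm_sub_sq_real, inner_smul_left, inner_smul_right, conj_trivial,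
      hcomm, norm_smul, norm_smul, hv₁, hvhat]
    simp [Real.norm_eq_abs, sq_abs]; ring
  refine sqle (norm_nonneg _) (by positivity) ?_
  rw [hlhs, mul_pow, Real.sq_sqrt (by nlinarith : (0:ℝ) ≤ 1 - c^2)]
  nlinarith [hkey]

lemma onorm_sum {d : ℕ} {u : Fin d → EVec d} (h : Orthonormal ℝ u) (l : Fin d → ℝ) :
    ‖∑ i, l i • u i‖^2 = ∑ i, (l i)^2 := by
  have h2 := h.inner_sum l l Finset.univ
  rw [← real_inner_self_eq_norm_sq, h2]
  simp [sq]

set_option maxHeartbeats 1000000 in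
/-- Bound on `‖Q‖₂` for the inexact index-1 iteration matrix: if `H` is symmetric with
eigenvalues `λ₁ < 0 < λ₂ ≤ … ≤ λ_d`, `μ ≤ |λᵢ| ≤ L`, `v₁` a unit eigenvector for `λ₁`,
`0 < α < 1/2`, `v̂` a unit vector with `(v₁ᵀ v̂)² ≥ 1 - α`, and `β = 2/(L + (1-2α)μ)`,
then `Q = I - β (I - 2 v̂ v̂ᵀ) H` satisfies
`‖Q‖₂ ≤ (L - (1-2α)μ)/(L + (1-2α)μ) + 4L(α + √α)/(L + (1-2α)μ)`. -/
theorem Q_norm_bound_inexact {d : ℕ} (hd : 1 < d)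
    (H : Matrix (Fin d) (Fin d) ℝ) (hH : H.IsSymm)
    (u : Fin d → EVec d)
    (hortho : ∀ i j, (inner ℝ (u i) (u j) : ℝ) = if i = j then 1 else 0)
    (lam : Fin d → ℝ) (hmono : Monotone lam)
    (heig : ∀ i, mulVecE H (u i) = lam i • u i)
    (μ L : ℝ) (hμ : 0 < μ) (hμL : μ < L)
    (hneg : lam ⟨0, by omega⟩ < 0) (hpos : 0 < lam ⟨1, hd⟩)
    (hbd : ∀ i, μ ≤ |lam i| ∧ |lam i| ≤ L)
    (v₁ : EVec d) (hv₁ : ‖v₁‖ = 1)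
    (hv₁eig : mulVecE H v₁ = lam ⟨0, by omega⟩ • v₁)
    (α : ℝ) (hα : 0 < α) (hα2 : α < 1 / 2)
    (vhat : EVec d) (hvhat : ‖vhat‖ = 1)
    (hclose : (inner ℝ v₁ vhat : ℝ) ^ 2 ≥ 1 - α)
    (β : ℝ) (hβ : β = 2 / (L + (1 - 2 * α) * μ)) :
    specNorm (1 - β • ((1 - (2 : ℝ) • outer vhat vhat) * H)) ≤
      (L - (1 - 2 * α) * μ) / (L + (1 - 2 * α) * μ) +
        4 * L * (α + Real.sqrt α) / (L + (1 - 2 * α) * μ) := by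
  have hL0 : 0 < L := hμ.trans hμL
  have h2α : 0 < 1 - 2*α := by linarith
  set i0 : Fin d := ⟨0, by omega⟩ with hi0
  set μ' : ℝ := (1 - 2 * α) * μ with hμ'def
  have hμ'pos : 0 < μ' := by rw [hμ'def]; nlinarith
  have hμ'μ : μ' ≤ μ := by rw [hμ'def]; nlinarith
  have hden : 0 < L + μ' := by linarith
  have hβpos : 0 < β := by rw [hβ]; positivity
  set κ : ℝ := (L - μ') / (L + μ') with hκ
  have hκ0 : 0 ≤ κ := div_nonneg (by linarith) hden.le
  have hβL : β * L - 1 = κ := by rw [hβ, hκ]; field_simp; ring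
  have hβμ' : 1 - β * μ' = κ := by rw [hβ, hκ]; field_simp; ring
  have habs : ∀ t : ℝ, μ ≤ t → t ≤ L → |1 - β * t| ≤ κ := by
    intro t h1 h2
    rw [abs_le]; constructor
    · have : β * t ≤ β * L := by nlinarith
      linarith
    · have : β * μ' ≤ β * t := by nlinarith
      linarith
  -- orthonormal basis
  have honb : Orthonormal ℝ u := orthonormal_iff_ite.mpr hortho
  have : Nonempty (Fin d) := ⟨i0⟩
  have hsp : ⊤ ≤ Submodule.span ℝ (Set.range u) :=
    (honb.linearIndependent.span_eq_top_of_card_eq_finrank (by simp)).ge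
  set b : OrthonormalBasis (Fin d) ℝ (EVec d) := OrthonormalBasis.mk honb hsp with hbdef
  have hb : ∀ i, b i = u i := fun i => by rw [hbdef, OrthonormalBasis.coe_mk]
  have hexp : ∀ x : EVec d, ∑ i, (inner ℝ (u i) x : ℝ) • u i = x := by
    intro x
    have h3 := b.sum_repr' x
    simp only [hb] at h3
    exact h3
  -- eigenvalue positivity off i0
  have hposoff : ∀ i : Fin d, i ≠ i0 → 0 < lam i := by
    intro i hi
    have h0 : i.val ≠ 0 := fun h => hi (Fin.ext h)
    have h1 : (⟨1, hd⟩ : Fin d) ≤ i := by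
      rw [Fin.le_def]
      show 1 ≤ i.val
      omega
    exact lt_of_lt_of_le hpos (hmono h1)
  -- coefficients of v₁
  have hcoef : ∀ i, i ≠ i0 → (inner ℝ (u i) v₁ : ℝ) = 0 := by
    intro i hi
    have h1 : (inner ℝ (mulVecE H (u i)) v₁ : ℝ) = lam i * inner ℝ (u i) v₁ := by
      rw [heig i, real_inner_smul_left]
    have h2 : (inner ℝ (u i) (mulVecE H v₁) : ℝ) = lam i0 * inner ℝ (u i) v₁ := by
      rw [hv₁eig, real_inner_smul_right]
    have h3 := mulVecE_symm_adj H hH (u i) v₁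
    have h4 : (lam i - lam i0) * (inner ℝ (u i) v₁ : ℝ) = 0 := by
      have := h1.symm.trans (h3.trans h2)
      ring_nf
      ring_nf at this
      linarith
    rcases mul_eq_zero.mp h4 with h5 | h5
    · exfalso
      have hp1 := hposoff i hi
      rw [sub_eq_zero] at h5
      linarith
    · exact h5
  have hv1u : v₁ = (inner ℝ (u i0) v₁ : ℝ) • u i0 := by
    conv_lhs => rw [← hexp v₁]
    rw [Finset.sum_eq_single i0]
    · intro i _ hi; rw [hcoef i hi, zero_smul]
    · intro h; exact absurd (Finset.mem_univ i0) h
  have hu0n : ‖u i0‖ = 1 := by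
    have h1 : (inner ℝ (u i0) (u i0) : ℝ) = 1 := by rw [hortho i0 i0]; simp
    have h2 : ‖u i0‖^2 = 1 := by rw [← real_inner_self_eq_norm_sq, h1]
    nlinarith [norm_nonneg (u i0)]
  obtain ⟨c₀, hc₀⟩ : ∃ c₀ : ℝ, c₀ = inner ℝ (u i0) v₁ := ⟨_, rfl⟩
  have hv1u' : v₁ = c₀ • u i0 := by rw [hc₀]; exact hv1u
  have hc0sq : c₀^2 = 1 := by
    have h1 : ‖v₁‖ = |c₀| * ‖u i0‖ := by
      conv_lhs => rw [hv1u']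
      rw [norm_smul, Real.norm_eq_abs]
    rw [hv₁, hu0n, mul_one] at h1
    rw [← sq_abs, ← h1]; norm_num
  -- the scalar multipliers
  obtain ⟨m, hm⟩ : ∃ m : Fin d → ℝ,
      m = fun i => if i = i0 then 1 + β * lam i0 else 1 - β * lam i := ⟨_, rfl⟩
  have hmi0 : m i0 = 1 + β * lam i0 := by rw [hm]; simp
  have hmne : ∀ i, i ≠ i0 → m i = 1 - β * lam i := by intro i hi; rw [hm]; simp [hi]
  have hmb : ∀ i, |m i| ≤ κ := by
    intro i
    by_cases hi : i = i0
    · rw [hi, hmi0]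
      have habs0 : |lam i0| = -lam i0 := abs_of_neg hneg
      obtain ⟨hb1, hb2⟩ := hbd i0
      rw [habs0] at hb1 hb2
      have := habs (-lam i0) hb1 hb2
      rw [show 1 - β * -lam i0 = 1 + β * lam i0 by ring] at this
      exact this
    · rw [hmne i hi]
      have habs0 : |lam i| = lam i := abs_of_pos (hposoff i hi)
      obtain ⟨hb1, hb2⟩ := hbd i
      rw [habs0] at hb1 hb2
      exact habs (lam i) hb1 hb2
  -- start the operator norm bound
  rw [specNorm]
  have hRHS : (L - μ') / (L + μ') + 4 * L * (α + Real.sqrt α) / (L + μ') =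
      κ + 4 * L * (α + Real.sqrt α) / (L + μ') := by rw [hκ]
  refine ContinuousLinearMap.opNorm_le_bound _ ?_ ?_
  · have : 0 ≤ 4 * L * (α + Real.sqrt α) / (L + μ') := by positivity
    rw [hκ] at hκ0; linarith [hκ0]
  intro x
  have hcoe : (LinearMap.toContinuousLinearMap
      (Matrix.toEuclideanLin (1 - β • ((1 - (2 : ℝ) • outer vhat vhat) * H)))) x
      = mulVecE (1 - β • ((1 - (2 : ℝ) • outer vhat vhat) * H)) x := rfl
  rw [hcoe]
  set a : Fin d → ℝ := fun i => inner ℝ (u i) x with hA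
  have hx : ∑ i, a i • u i = x := hexp x
  have hxn : ‖x‖^2 = ∑ i, (a i)^2 := by rw [← hx, onorm_sum honb]
  have hHx : mulVecE H x = ∑ i, (lam i * a i) • u i := by
    conv_lhs => rw [← hx]
    show Matrix.toEuclideanLin H (∑ i, a i • u i) = _
    rw [map_sum]
    refine Finset.sum_congr rfl fun i _ => ?_
    rw [_root_.map_smul]
    show a i • mulVecE H (u i) = _
    rw [heig i, smul_smul, mul_comm]
  have hHxn : ‖mulVecE H x‖ ≤ L * ‖x‖ := by
    refine sqle (norm_nonneg _) (by positivity) ?_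
    rw [hHx, onorm_sum honb, mul_pow, hxn, Finset.mul_sum]
    refine Finset.sum_le_sum fun i _ => ?_
    obtain ⟨_, hb2⟩ := hbd i
    nlinarith [mul_self_le_mul_self (abs_nonneg (lam i)) hb2, sq_abs (lam i), sq_nonneg (a i)]
  have hiv : (inner ℝ v₁ (mulVecE H x) : ℝ) • v₁ = (lam i0 * a i0) • u i0 := by
    have h1 : (inner ℝ v₁ (mulVecE H x) : ℝ) = c₀ * (lam i0 * a i0) := by
      conv_lhs => rw [hv1u', hHx]
      rw [real_inner_smul_left]
      rw [honb.inner_right_fintype (fun j => lam j * a j) i0]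
    rw [h1]
    conv_lhs => rw [hv1u']
    rw [smul_smul]
    congr 1
    linear_combination (lam i0 * a i0) * hc0sq
  -- decomposition of Q x
  have hQx : mulVecE (1 - β • ((1 - (2 : ℝ) • outer vhat vhat) * H)) x
      = (∑ i, (m i * a i) • u i)
        + (2*β) • ((inner ℝ vhat (mulVecE H x) : ℝ) • vhat
            - (inner ℝ v₁ (mulVecE H x) : ℝ) • v₁) := by
    have hmat : (1 - (2 : ℝ) • outer vhat vhat) * H
        = H - (2 : ℝ) • (outer vhat vhat * H) := by
      rw [sub_mul, one_mul, Matrix.smul_mul]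
    rw [hmat, mulVecE_sub, mulVecE_one, mulVecE_smulM, mulVecE_sub, mulVecE_smulM,
      mulVecE_mul, mulVecE_outer]
    rw [hiv]
    have hsum : ∑ i, (m i * a i) • u i
        = (∑ i, a i • u i) - β • (∑ i, (lam i * a i) • u i)
          + (2*β*(lam i0 * a i0)) • u i0 := by
      rw [Finset.smul_sum]
      have hlast : ∑ i, (if i = i0 then (2*β*(lam i0 * a i0)) else 0) • u i
          = (2*β*(lam i0 * a i0)) • u i0 := by
        simp only [ite_smul, zero_smul]
        rw [Finset.sum_ite_eq' univ i0 (fun i => (2*β*(lam i0 * a i0)) • u i)]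
        simp
      rw [← hlast, ← Finset.sum_sub_distrib, ← Finset.sum_add_distrib]
      refine Finset.sum_congr rfl fun i _ => ?_
      by_cases hi : i = i0
      · subst hi
        rw [hmi0, if_pos rfl, smul_smul, ← sub_smul, ← add_smul]
        congr 1; ring
      · rw [hmne i hi, if_neg hi, smul_smul, ← sub_smul, ← add_smul]
        congr 1; ring
    obtain ⟨sv, hsv⟩ : ∃ sv : ℝ, sv = inner ℝ vhat (mulVecE H x) := ⟨_, rfl⟩
    rw [← hsv, hsum, hx, ← hHx]
    module
  rw [hQx]
  have hMn : ‖∑ i, (m i * a i) • u i‖ ≤ κ * ‖x‖ := by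
    refine sqle (norm_nonneg _) (by positivity) ?_
    rw [onorm_sum honb, mul_pow, hxn, Finset.mul_sum]
    refine Finset.sum_le_sum fun i _ => ?_
    nlinarith [mul_self_le_mul_self (abs_nonneg (m i)) (hmb i), sq_abs (m i), sq_nonneg (a i)]
  have hc2le : 1 - (inner ℝ v₁ vhat : ℝ)^2 ≤ α := by linarith [hclose]
  have hDn : ‖(inner ℝ vhat (mulVecE H x) : ℝ) • vhat
      - (inner ℝ v₁ (mulVecE H x) : ℝ) • v₁‖ ≤ Real.sqrt α * (L * ‖x‖) := by
    calc ‖(inner ℝ vhat (mulVecE H x) : ℝ) • vhat - (inner ℝ v₁ (mulVecE H x) : ℝ) • v₁‖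
        ≤ Real.sqrt (1 - (inner ℝ v₁ vhat : ℝ)^2) * ‖mulVecE H x‖ :=
          proj_diff_bound v₁ vhat hv₁ hvhat _
      _ ≤ Real.sqrt α * (L * ‖x‖) := by
          refine mul_le_mul (Real.sqrt_le_sqrt hc2le) hHxn (norm_nonneg _)
            (Real.sqrt_nonneg _)
  calc ‖(∑ i, (m i * a i) • u i)
        + (2*β) • ((inner ℝ vhat (mulVecE H x) : ℝ) • vhat
            - (inner ℝ v₁ (mulVecE H x) : ℝ) • v₁)‖
      ≤ κ * ‖x‖ + (2*β) * (Real.sqrt α * (L * ‖x‖)) := by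
        refine le_trans (norm_add_le _ _) (add_le_add hMn ?_)
        rw [norm_smul, Real.norm_eq_abs, abs_of_pos (by linarith : (0:ℝ) < 2*β)]
        exact mul_le_mul_of_nonneg_left hDn (by linarith)
      _ ≤ ((L - μ') / (L + μ') + 4 * L * (α + Real.sqrt α) / (L + μ')) * ‖x‖ := by
        rw [hRHS, add_mul]
        have h4 : 4 * L * (α + Real.sqrt α) / (L + μ') = 2 * β * L * (α + Real.sqrt α) := by
          rw [hβ]; ring
        rw [h4]
        have h5 : (0:ℝ) ≤ 2 * β * L * α * ‖x‖ := by positivity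
        nlinarith [h5]
  done
end
end

section
/- Suppose E, x*, δ, M, μ, L satisfy Assumption (A) with k = 1, and let κ = L/μ. Let α satisfy 0 < α < 1/2 and 1 − 2α > 2κ(α + 2√α). Let x ∈ ℝ^d with r = ‖x − x*‖₂ < δ, let v₁ be a unit eigenvector of ∇²E(x) corresponding to its smallest eigenvalue, and let v̂ be a unit vector with (v₁ᵀv̂)² ≥ 1−α. Let β = 2/(L + (1−2α)μ) and x⁺ = x − β·(I − 2·v̂·v̂ᵀ)·∇E(x). Then ‖x⁺ − x*‖₂ ≤ (1 − q(α))·r + c(α)·r², where η = 1 − 2α − 2κ(α + 2√α) > 0, q(α) = 2η/(κ + 1 − 2α) ∈ (0,1), and c(α) = (M/μ)/(κ + 1 − 2α) > 0. -/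
open Matrix Finset Filter

noncomputable section

local notation "⟪" x ", " y "⟫" => @inner ℝ _ _ x y

namespace Th43

variable {d : ℕ}

lemma inner_eq (x y : EVec d) : ⟪x, y⟫ = ∑ i, x i * y i := by
  simp [PiLp.inner_apply, RCLike.inner_apply, conj_trivial]
  exact Finset.sum_congr rfl fun _ _ => mul_comm _ _

lemma mulVecE_apply (A : Matrix (Fin d) (Fin d) ℝ) (z : EVec d) (i : Fin d) :
    mulVecE A z i = ∑ j, A i j * z j := by
  simp [mulVecE, Matrix.toEuclideanLin_apply, Matrix.mulVec, dotProduct]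

lemma mulVecE_one (z : EVec d) : mulVecE (1 : Matrix (Fin d) (Fin d) ℝ) z = z := by
  ext i
  simp [mulVecE_apply, Matrix.one_apply]

lemma mulVecE_msub (A B : Matrix (Fin d) (Fin d) ℝ) (z : EVec d) :
    mulVecE (A - B) z = mulVecE A z - mulVecE B z := by
  simp [mulVecE, map_sub, LinearMap.sub_apply]

lemma mulVecE_msmul (c : ℝ) (A : Matrix (Fin d) (Fin d) ℝ) (z : EVec d) :
    mulVecE (c • A) z = c • mulVecE A z := by
  simp [mulVecE, _root_.map_smul, LinearMap.smul_apply]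

lemma mulVecE_neg_vec (A : Matrix (Fin d) (Fin d) ℝ) (z : EVec d) :
    mulVecE A (-z) = -mulVecE A z := by
  simp [mulVecE, map_neg]

lemma mulVecE_outer (v w z : EVec d) :
    mulVecE (outer v w) z = ⟪w, z⟫ • v := by
  ext i
  simp only [mulVecE_apply, outer, Matrix.of_apply, inner_eq, PiLp.smul_apply, smul_eq_mul]
  rw [Finset.sum_mul]
  exact Finset.sum_congr rfl fun j _ => by ring

lemma inner_mulVecE_symm {A : Matrix (Fin d) (Fin d) ℝ} (h : A.IsSymm) (y z : EVec d) :
    ⟪mulVecE A y, z⟫ = ⟪y, mulVecE A z⟫ := by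
  simp only [inner_eq, mulVecE_apply]
  simp only [Finset.sum_mul, Finset.mul_sum]
  rw [Finset.sum_comm]
  refine Finset.sum_congr rfl fun i _ => Finset.sum_congr rfl fun j _ => ?_
  rw [← h.apply i j]
  ring

lemma norm_mulVecE_le (A : Matrix (Fin d) (Fin d) ℝ) (z : EVec d) :
    ‖mulVecE A z‖ ≤ specNorm A * ‖z‖ := by
  exact (LinearMap.toContinuousLinearMap (Matrix.toEuclideanLin A)).le_opNorm z


lemma le_of_sq_le_sq {a b : ℝ} (h : a^2 ≤ b^2) (ha : 0 ≤ a) (hb : 0 ≤ b) : a ≤ b := by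
  nlinarith

lemma inner_self_one {v : EVec d} (hv : ‖v‖ = 1) : ⟪v, v⟫ = 1 := by
  rw [real_inner_self_eq_norm_sq, hv]; norm_num

lemma expand_sub (e f : EVec d) : ‖e - f‖ ^ 2 = ⟪e, e⟫ - 2 * ⟪e, f⟫ + ⟪f, f⟫ := by
  rw [norm_sub_sq_real, real_inner_self_eq_norm_sq, real_inner_self_eq_norm_sq]

lemma reflect_norm {v : EVec d} (hv : ‖v‖ = 1) (z : EVec d) :
    ‖z - (2 * ⟪v, z⟫) • v‖ = ‖z‖ := by
  have h1 : ‖z - (2 * ⟪v, z⟫) • v‖ ^ 2 = ‖z‖ ^ 2 := by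
    rw [expand_sub]
    simp only [real_inner_smul_left, real_inner_smul_right, inner_self_one hv,
      real_inner_comm v z]
    simp only [real_inner_self_eq_norm_sq]
    ring
  rw [← Real.sqrt_sq (norm_nonneg (z - (2 * ⟪v, z⟫) • v)), ← Real.sqrt_sq (norm_nonneg z), h1]

lemma D_bound {v vh : EVec d} (hv : ‖v‖ = 1) (hvh : ‖vh‖ = 1) (z : EVec d) :
    ‖⟪vh, z⟫ • vh - ⟪v, z⟫ • v‖ ^ 2 ≤ (1 - ⟪v, vh⟫ ^ 2) * ‖z‖ ^ 2 := by
  obtain ⟨c, hc⟩ : ∃ c, ⟪v, vh⟫ = c := ⟨_, rfl⟩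
  obtain ⟨a, ha⟩ : ∃ a, ⟪v, z⟫ = a := ⟨_, rfl⟩
  obtain ⟨b, hb⟩ : ∃ b, ⟪vh, z⟫ = b := ⟨_, rfl⟩
  have hc' : ⟪vh, v⟫ = c := by rw [real_inner_comm, hc]
  have ha' : ⟪z, v⟫ = a := by rw [real_inner_comm, ha]
  have hD : ‖b • vh - a • v‖ ^ 2 = b ^ 2 + a ^ 2 - 2 * a * b * c := by
    rw [expand_sub]
    simp only [real_inner_smul_left, real_inner_smul_right, inner_self_one hv,
      inner_self_one hvh, hc']
    ring
  have hww : ‖vh - c • v‖ ^ 2 = 1 - c ^ 2 := by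
    rw [expand_sub]
    simp only [real_inner_smul_left, real_inner_smul_right, inner_self_one hv,
      inner_self_one hvh, hc']
    ring
  have hza : ‖z - a • v‖ ^ 2 = ‖z‖ ^ 2 - a ^ 2 := by
    rw [expand_sub]
    simp only [real_inner_smul_left, real_inner_smul_right, inner_self_one hv, ha']
    simp only [real_inner_self_eq_norm_sq]
    ring
  have hwz : ⟪vh - c • v, z - a • v⟫ = b - c * a := by
    simp only [inner_sub_left, inner_sub_right, real_inner_smul_left, real_inner_smul_right,
      inner_self_one hv, ha', hb, hc', real_inner_comm v z, ha]
    ring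
  have hCS : |⟪vh - c • v, z - a • v⟫| ≤ ‖vh - c • v‖ * ‖z - a • v‖ :=
    abs_real_inner_le_norm _ _
  have h2 : ⟪vh - c • v, z - a • v⟫ ^ 2 ≤ ‖vh - c • v‖ ^ 2 * ‖z - a • v‖ ^ 2 := by
    nlinarith [sq_abs (⟪vh - c • v, z - a • v⟫ : ℝ), abs_nonneg (⟪vh - c • v, z - a • v⟫ : ℝ),
      norm_nonneg (vh - c • v), norm_nonneg (z - a • v)]
  rw [hwz, hww, hza] at h2
  rw [hb, ha, hc, hD]
  nlinarith [h2]


lemma taylor_grad {g : EVec d → EVec d} {hessf : EVec d → Matrix (Fin d) (Fin d) ℝ}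
    {xstar x : EVec d} {δ M : ℝ}
    (hg : ∀ y, HasFDerivAt g
      (LinearMap.toContinuousLinearMap (Matrix.toEuclideanLin (hessf y))) y)
    (hg0 : g xstar = 0)
    (hLip : ∀ a b : EVec d, ‖a - xstar‖ < δ → ‖b - xstar‖ < δ →
      specNorm (hessf a - hessf b) ≤ M * ‖a - b‖)
    (hx : ‖x - xstar‖ < δ) :
    ‖g x - mulVecE (hessf x) (x - xstar)‖ ≤ M / 2 * ‖x - xstar‖ ^ 2 := by
  set u : EVec d := xstar - x with hu
  have hun : ‖u‖ = ‖x - xstar‖ := norm_sub_rev _ _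
  set F : ℝ → EVec d := fun t => g (x + t • u) - g x - t • mulVecE (hessf x) u with hF
  set F' : ℝ → EVec d := fun t => mulVecE (hessf (x + t • u)) u - mulVecE (hessf x) u with hF'
  have hderiv : ∀ t : ℝ, HasDerivAt F (F' t) t := by
    intro t
    have h1 : HasDerivAt (fun s : ℝ => x + s • u) u t := by
      simpa using ((hasDerivAt_id t).smul_const u).const_add x
    have h2 := (hg (x + t • u)).comp_hasDerivAt t h1
    have h3 : HasDerivAt (fun s : ℝ => s • mulVecE (hessf x) u) (mulVecE (hessf x) u) t := by
      simpa using (hasDerivAt_id t).smul_const (mulVecE (hessf x) u)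
    have h4 := (h2.sub_const (g x)).sub h3
    convert h4 using 1 <;> rfl
  have hball : ∀ t : ℝ, t ∈ Set.Icc (0:ℝ) 1 → ‖x + t • u - xstar‖ < δ := by
    intro t ht
    have hrw : x + t • u - xstar = (1 - t) • (x - xstar) := by
      rw [hu]
      module
    rw [hrw, norm_smul, Real.norm_eq_abs, abs_of_nonneg (by linarith [ht.2])]
    calc (1 - t) * ‖x - xstar‖ ≤ 1 * ‖x - xstar‖ := by
          apply mul_le_mul_of_nonneg_right (by linarith [ht.1]) (norm_nonneg _)
    _ < δ := by rw [one_mul]; exact hx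
  have hbound : ∀ t ∈ Set.Ico (0:ℝ) 1, ‖F' t‖ ≤ M * ‖u‖ ^ 2 * t := by
    intro t ht
    have h1 : F' t = mulVecE (hessf (x + t • u) - hessf x) u := (mulVecE_msub _ _ _).symm
    have h2 : ‖F' t‖ ≤ specNorm (hessf (x + t • u) - hessf x) * ‖u‖ := by
      rw [h1]; exact norm_mulVecE_le _ _
    have h3 : specNorm (hessf (x + t • u) - hessf x) ≤ M * ‖t • u‖ := by
      have := hLip (x + t • u) x (hball t ⟨ht.1, le_of_lt ht.2⟩) hx
      simpa using this
    have h4 : ‖t • u‖ = t * ‖u‖ := by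
      rw [norm_smul, Real.norm_eq_abs, abs_of_nonneg ht.1]
    calc ‖F' t‖ ≤ M * ‖t • u‖ * ‖u‖ :=
          h2.trans (mul_le_mul_of_nonneg_right h3 (norm_nonneg u))
    _ = M * ‖u‖ ^ 2 * t := by rw [h4]; ring
  set B : ℝ → ℝ := fun t => M * ‖u‖ ^ 2 * (t ^ 2 / 2) with hB
  have hBd : ∀ t : ℝ, HasDerivAt B (M * ‖u‖ ^ 2 * t) t := by
    intro t
    have := ((hasDerivAt_pow 2 t).div_const 2).const_mul (M * ‖u‖ ^ 2)
    simpa using this.congr_deriv (by push_cast; ring)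
  have key := image_norm_le_of_norm_deriv_right_le_deriv_boundary
    (f := F) (f' := F') (a := 0) (b := 1)
    (fun t ht => (hderiv t).continuousAt.continuousWithinAt)
    (fun t ht => (hderiv t).hasDerivWithinAt)
    (by simp [hF, hB]) hBd hbound
  have h1 : ‖F 1‖ ≤ M * ‖u‖ ^ 2 * (1 ^ 2 / 2) := key (Set.mem_Icc.mpr ⟨zero_le_one, le_refl 1⟩)
  have hF1 : F 1 = -(g x - mulVecE (hessf x) (x - xstar)) := by
    rw [hF]
    simp only [one_smul]
    have : x + u = xstar := by rw [hu]; abel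
    rw [this, hg0, hu]
    have hmu : mulVecE (hessf x) (xstar - x) = -mulVecE (hessf x) (x - xstar) := by
      have : xstar - x = -(x - xstar) := by abel
      rw [this, mulVecE_neg_vec]
    rw [hmu]
    abel
  rw [hF1, norm_neg] at h1
  calc ‖g x - mulVecE (hessf x) (x - xstar)‖ ≤ M * ‖u‖ ^ 2 * (1 ^ 2 / 2) := h1
  _ = M / 2 * ‖x - xstar‖ ^ 2 := by rw [hun]; ring

end Th43


set_option maxHeartbeats 1000000 in
/-- Theorem 4.3 (single-step estimate, approximate eigenvector, index 1): under
Assumption (A) with `k = 1`, `κ = L/μ`, `0 < α < 1/2` with `1 - 2α > 2κ(α + 2√α)`,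
if `r = ‖x - x*‖₂ < δ`, `v₁` is a unit eigenvector of the smallest eigenvalue of
`∇²E(x)`, `v̂` is a unit vector with `(v₁ᵀ v̂)² ≥ 1 - α`, `β = 2/(L + (1-2α)μ)` and
`x⁺ = x - β (I - 2 v̂ v̂ᵀ) ∇E(x)`, then with `η = 1 - 2α - 2κ(α + 2√α) > 0`,
`q(α) = 2η/(κ + 1 - 2α) ∈ (0,1)` and `c(α) = (M/μ)/(κ + 1 - 2α) > 0` we have
`‖x⁺ - x*‖₂ ≤ (1 - q(α)) r + c(α) r²`. -/
theorem index1_inexact_single_step {d : ℕ} (E : EVec d → ℝ)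
    (hess : EVec d → Matrix (Fin d) (Fin d) ℝ)
    (xstar : EVec d) (δ M μ L : ℝ)
    (hA : AssumptionA 1 E hess xstar δ M μ L)
    (κ : ℝ) (hκ : κ = L / μ)
    (α : ℝ) (hα : 0 < α) (hα2 : α < 1 / 2)
    (hαsmall : 1 - 2 * α > 2 * κ * (α + 2 * Real.sqrt α))
    (x : EVec d) (hx : ‖x - xstar‖ < δ)
    (v₁ : EVec d) (hv₁ : ‖v₁‖ = 1) (lam₁ : ℝ)
    (heig : mulVecE (hess x) v₁ = lam₁ • v₁)
    (hmin : ∀ (t : ℝ) (w : EVec d), w ≠ 0 → mulVecE (hess x) w = t • w → lam₁ ≤ t)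
    (vhat : EVec d) (hvhat : ‖vhat‖ = 1)
    (hclose : (inner ℝ v₁ vhat : ℝ) ^ 2 ≥ 1 - α)
    (β : ℝ) (hβ : β = 2 / (L + (1 - 2 * α) * μ))
    (xplus : EVec d)
    (hstep : xplus = x - β • mulVecE (1 - (2 : ℝ) • outer vhat vhat) (gradient E x)) :
    0 < 1 - 2 * α - 2 * κ * (α + 2 * Real.sqrt α) ∧
    2 * (1 - 2 * α - 2 * κ * (α + 2 * Real.sqrt α)) / (κ + 1 - 2 * α) ∈ Set.Ioo (0 : ℝ) 1 ∧
    0 < (M / μ) / (κ + 1 - 2 * α) ∧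
    ‖xplus - xstar‖ ≤
      (1 - 2 * (1 - 2 * α - 2 * κ * (α + 2 * Real.sqrt α)) / (κ + 1 - 2 * α)) * ‖x - xstar‖ +
        (M / μ) / (κ + 1 - 2 * α) * ‖x - xstar‖ ^ 2 := by
  obtain ⟨hE2, hgrad, hsymm, hg0, hδ, hM, hμ0, hμL, hLip, heigs⟩ := hA
  obtain ⟨u, lam, h_on, h_eig, h_mono, h_neg, h_pos, h_bnd⟩ := heigs x hx
  have hL : (0:ℝ) < L := lt_trans hμ0 hμL
  have hκ1 : 1 < κ := by rw [hκ]; exact (one_lt_div hμ0).mpr hμL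
  have hα' : (0:ℝ) < 1 - 2*α := by linarith
  have hs : 0 ≤ Real.sqrt α := Real.sqrt_nonneg α
  have hs2 : Real.sqrt α ^ 2 = α := Real.sq_sqrt (le_of_lt hα)
  have hκpos : (0:ℝ) < κ + 1 - 2*α := by linarith
  have hη : (0:ℝ) < 1 - 2*α - 2*κ*(α + 2*Real.sqrt α) := by linarith
  have hq0 : (0:ℝ) < 2*(1 - 2*α - 2*κ*(α + 2*Real.sqrt α))/(κ + 1 - 2*α) :=
    div_pos (by linarith) hκpos
  have hq1 : 2*(1 - 2*α - 2*κ*(α + 2*Real.sqrt α))/(κ + 1 - 2*α) < 1 := by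
    rw [div_lt_one hκpos]
    nlinarith [mul_nonneg (le_of_lt (lt_trans one_pos hκ1))
      (by positivity : (0:ℝ) ≤ α + 2*Real.sqrt α)]
  have hcc0 : (0:ℝ) < (M/μ)/(κ+1-2*α) := div_pos (div_pos hM hμ0) hκpos
  refine ⟨hη, ⟨hq0, hq1⟩, hcc0, ?_⟩
  -- dimension is positive
  have hd : 0 < d := by
    rcases Nat.eq_zero_or_pos d with h | h
    · exfalso
      subst h
      have hz : v₁ = 0 := by ext i; exact absurd i.2 (by omega)
      rw [hz, norm_zero] at hv₁
      norm_num at hv₁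
    · exact h
  have hD0 : (0:ℝ) < L + (1-2*α)*μ := by nlinarith
  have hβpos : 0 < β := by rw [hβ]; positivity
  set i₀ : Fin d := ⟨0, hd⟩ with hi₀
  -- orthonormal basis
  have horth : Orthonormal ℝ u := orthonormal_iff_ite.mpr h_on
  have hrestrict : Orthonormal ℝ (Set.univ.restrict u) :=
    horth.comp _ Subtype.val_injective
  obtain ⟨b, hb⟩ := Orthonormal.exists_orthonormalBasis_extension_of_card_eq
    (by simp) hrestrict
  have hbu : ∀ i, b i = u i := fun i => hb i (Set.mem_univ i)
  have parseval : ∀ z : EVec d, ‖z‖^2 = ∑ i, (⟪u i, z⟫:ℝ)^2 := by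
    intro z
    calc ‖z‖^2 = (⟪z, z⟫:ℝ) := (real_inner_self_eq_norm_sq z).symm
    _ = ∑ i, (⟪z, b i⟫:ℝ) * ⟪b i, z⟫ := (b.sum_inner_mul_inner z z).symm
    _ = ∑ i, (⟪u i, z⟫:ℝ)^2 := by
        refine Finset.sum_congr rfl fun i _ => ?_
        rw [hbu, real_inner_comm (u i) z, ← sq]
  -- inner products with eigenvectors
  have hH : ∀ (i : Fin d) (z : EVec d), (⟪u i, mulVecE (hess x) z⟫:ℝ) = lam i * ⟪u i, z⟫ := by
    intro i z
    rw [← Th43.inner_mulVecE_symm (hsymm x), h_eig i, real_inner_smul_left]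
  -- eigenvalue facts
  have hu0ne : u i₀ ≠ 0 := by
    intro h
    have h1 := h_on i₀ i₀
    rw [h, if_pos rfl] at h1
    simp at h1
  have hlam0neg : lam i₀ < 0 := h_neg i₀ (by simp [hi₀])
  have hlam1le : lam₁ ≤ lam i₀ := hmin (lam i₀) (u i₀) hu0ne (h_eig i₀)
  have hlampos : ∀ i, i ≠ i₀ → 0 < lam i := by
    intro i hi
    refine h_pos i ?_
    have h1 : (i : ℕ) ≠ 0 := fun h => hi (Fin.ext (by simp [hi₀, h]))
    omega
  -- v₁ lies in the span of u i₀
  have hv1c : ∀ i, i ≠ i₀ → (⟪u i, v₁⟫:ℝ) = 0 := by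
    intro i hi
    have h1 : lam i * ⟪u i, v₁⟫ = lam₁ * ⟪u i, v₁⟫ := by
      rw [← hH i v₁, heig, real_inner_smul_right]
    have h2 : lam₁ < lam i := lt_of_le_of_lt hlam1le (lt_trans hlam0neg (hlampos i hi))
    have h3 : (lam i - lam₁) * ⟪u i, v₁⟫ = 0 := by linear_combination h1
    exact (mul_eq_zero.mp h3).resolve_left (sub_ne_zero_of_ne (ne_of_gt h2))
  have hrepr : v₁ = (⟪u i₀, v₁⟫:ℝ) • u i₀ := by
    have h1 := b.sum_repr v₁
    rw [Finset.sum_eq_single i₀ ?_ ?_] at h1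
    · rw [b.repr_apply_apply, hbu] at h1
      exact h1.symm
    · intro i _ hi
      rw [b.repr_apply_apply, hbu, hv1c i hi, zero_smul]
    · intro h; exact absurd (Finset.mem_univ i₀) h
  have hc₀ : (⟪u i₀, v₁⟫:ℝ)^2 = 1 := by
    have h1 := parseval v₁
    rw [hv₁, Finset.sum_eq_single i₀ (fun i _ hi => by rw [hv1c i hi]; norm_num)
      (fun h => absurd (Finset.mem_univ i₀) h)] at h1
    rw [← h1]; norm_num
  have hkey : ∀ z : EVec d, (⟪v₁, z⟫:ℝ) • v₁ = (⟪u i₀, z⟫:ℝ) • u i₀ := by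
    intro z
    conv_lhs => rw [hrepr]
    rw [real_inner_smul_left, smul_smul]
    have h2 : (⟪u i₀, v₁⟫:ℝ) * ⟪u i₀, z⟫ * ⟪u i₀, v₁⟫ = (⟪u i₀, z⟫:ℝ) := by
      calc (⟪u i₀, v₁⟫:ℝ) * ⟪u i₀, z⟫ * ⟪u i₀, v₁⟫ = ⟪u i₀, v₁⟫^2 * ⟪u i₀, z⟫ := by ring
      _ = ⟪u i₀, z⟫ := by rw [hc₀]; ring
    rw [h2]
  -- Taylor estimate
  have htay : ‖gradient E x - mulVecE (hess x) (x - xstar)‖ ≤ M/2 * ‖x - xstar‖^2 :=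
    Th43.taylor_grad hgrad hg0 hLip hx
  -- abbreviations
  obtain ⟨A1, hA1def⟩ : ∃ A1 : EVec d, A1 = (x - xstar) - β • mulVecE (hess x) (x - xstar)
      + (2*β*⟪u i₀, mulVecE (hess x) (x - xstar)⟫) • u i₀ := ⟨_, rfl⟩
  obtain ⟨Dt, hDtdef⟩ : ∃ Dt : EVec d, Dt = (⟪vhat, mulVecE (hess x) (x - xstar)⟫:ℝ) • vhat
      - (⟪v₁, mulVecE (hess x) (x - xstar)⟫:ℝ) • v₁ := ⟨_, rfl⟩
  obtain ⟨er, herdef⟩ : ∃ er : EVec d, er = gradient E x - mulVecE (hess x) (x - xstar) :=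
    ⟨_, rfl⟩
  -- decomposition
  have hPg : mulVecE (1 - (2:ℝ) • outer vhat vhat) (gradient E x)
      = gradient E x - (2 * ⟪vhat, gradient E x⟫) • vhat := by
    rw [Th43.mulVecE_msub, Th43.mulVecE_one, Th43.mulVecE_msmul, Th43.mulVecE_outer, smul_smul]
  have hgsplit : gradient E x = mulVecE (hess x) (x - xstar) + er := by rw [herdef]; abel
  have hinner_split : (⟪vhat, gradient E x⟫:ℝ)
      = ⟪vhat, mulVecE (hess x) (x - xstar)⟫ + ⟪vhat, er⟫ := by
    rw [herdef, inner_sub_right]; ring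
  have hdecomp : xplus - xstar = A1 + (2*β) • Dt - β • (er - (2 * ⟪vhat, er⟫) • vhat) := by
    rw [hstep, hPg, hA1def, hDtdef, hkey (mulVecE (hess x) (x - xstar)), hinner_split, hgsplit]
    module
  -- coordinates of A1
  have hcoordA1 : ∀ i, (⟪u i, A1⟫:ℝ)
      = (1 - β * (if i = i₀ then -lam i₀ else lam i)) * ⟪u i, x - xstar⟫ := by
    intro i
    rw [hA1def, inner_add_right, inner_sub_right, real_inner_smul_right,
      real_inner_smul_right, hH i, hH i₀]
    have hone : (⟪u i, u i₀⟫:ℝ) = if i = i₀ then 1 else 0 := h_on i i₀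
    by_cases hi : i = i₀
    · subst hi
      rw [hone, if_pos rfl, if_pos rfl]
      ring
    · rw [hone, if_neg hi, if_neg hi]
      ring
  have hnu : ∀ i, μ ≤ (if i = i₀ then -lam i₀ else lam i)
      ∧ (if i = i₀ then -lam i₀ else lam i) ≤ L := by
    intro i
    by_cases hi : i = i₀
    · rw [if_pos hi]
      subst hi
      have h1 := h_bnd i₀
      rw [abs_of_neg hlam0neg] at h1
      exact h1
    · rw [if_neg hi]
      have h1 := h_bnd i
      rw [abs_of_pos (hlampos i hi)] at h1
      exact h1
  have hfac : ∀ i, (1 - β * (if i = i₀ then -lam i₀ else lam i))^2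
      ≤ ((L - (1-2*α)*μ)/(L+(1-2*α)*μ))^2 := by
    intro i
    obtain ⟨h1, h2⟩ := hnu i
    have e0 : 1 - β * (if i = i₀ then -lam i₀ else lam i)
        = (L+(1-2*α)*μ - 2*(if i = i₀ then -lam i₀ else lam i))/(L+(1-2*α)*μ) := by
      rw [hβ]; field_simp
    have habs : |1 - β * (if i = i₀ then -lam i₀ else lam i)|
        ≤ (L - (1-2*α)*μ)/(L+(1-2*α)*μ) := by
      rw [e0, abs_div, abs_of_pos hD0, div_le_div_iff_of_pos_right hD0, abs_le]
      constructor <;> nlinarith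
    calc (1 - β * (if i = i₀ then -lam i₀ else lam i))^2
        = |1 - β * (if i = i₀ then -lam i₀ else lam i)|^2 := (sq_abs _).symm
    _ ≤ ((L - (1-2*α)*μ)/(L+(1-2*α)*μ))^2 := pow_le_pow_left₀ (abs_nonneg _) habs 2
  have hρ0 : 0 ≤ (L - (1-2*α)*μ)/(L+(1-2*α)*μ) := by
    apply div_nonneg _ (le_of_lt hD0)
    nlinarith
  have hA1sq : ‖A1‖^2 ≤ ((L - (1-2*α)*μ)/(L+(1-2*α)*μ))^2 * ‖x - xstar‖^2 := by
    rw [parseval A1]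
    calc ∑ i, (⟪u i, A1⟫:ℝ)^2
        ≤ ∑ i, ((L-(1-2*α)*μ)/(L+(1-2*α)*μ))^2 * (⟪u i, x - xstar⟫:ℝ)^2 := by
          refine Finset.sum_le_sum fun i _ => ?_
          rw [hcoordA1 i, mul_pow]
          exact mul_le_mul_of_nonneg_right (hfac i) (sq_nonneg _)
    _ = ((L-(1-2*α)*μ)/(L+(1-2*α)*μ))^2 * ‖x - xstar‖^2 := by
          rw [← Finset.mul_sum, ← parseval]
  have hA1n : ‖A1‖ ≤ ((L - (1-2*α)*μ)/(L+(1-2*α)*μ)) * ‖x - xstar‖ := by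
    have h2 : 0 ≤ ((L - (1-2*α)*μ)/(L+(1-2*α)*μ)) * ‖x - xstar‖ :=
      mul_nonneg hρ0 (norm_nonneg _)
    refine Th43.le_of_sq_le_sq ?_ (norm_nonneg A1) h2
    rw [mul_pow]
    exact hA1sq
  -- bound on Hessian action
  have hHwsq : ‖mulVecE (hess x) (x - xstar)‖^2 ≤ L^2 * ‖x - xstar‖^2 := by
    rw [parseval (mulVecE (hess x) (x - xstar))]
    calc ∑ i, (⟪u i, mulVecE (hess x) (x - xstar)⟫:ℝ)^2
        ≤ ∑ i, L^2 * (⟪u i, x - xstar⟫:ℝ)^2 := by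
          refine Finset.sum_le_sum fun i _ => ?_
          rw [hH i, mul_pow]
          have h3 := abs_le.mp (h_bnd i).2
          exact mul_le_mul_of_nonneg_right (sq_le_sq' h3.1 h3.2) (sq_nonneg _)
    _ = L^2 * ‖x - xstar‖^2 := by rw [← Finset.mul_sum, ← parseval]
  have hDtn : ‖Dt‖ ≤ Real.sqrt α * (L * ‖x - xstar‖) := by
    have h1 := Th43.D_bound hv₁ hvhat (mulVecE (hess x) (x - xstar))
    rw [← hDtdef] at h1
    have h2 : 1 - (⟪v₁, vhat⟫:ℝ)^2 ≤ α := by linarith [hclose]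
    have h3 : ‖Dt‖^2 ≤ α * (L * ‖x - xstar‖)^2 := by
      calc ‖Dt‖^2 ≤ (1 - (⟪v₁, vhat⟫:ℝ)^2) * ‖mulVecE (hess x) (x - xstar)‖^2 := h1
      _ ≤ α * ‖mulVecE (hess x) (x - xstar)‖^2 :=
          mul_le_mul_of_nonneg_right h2 (sq_nonneg _)
      _ ≤ α * (L * ‖x - xstar‖)^2 := by
          rw [mul_pow]
          exact mul_le_mul_of_nonneg_left hHwsq hα.le
    refine Th43.le_of_sq_le_sq ?_ (norm_nonneg Dt)
      (mul_nonneg hs (mul_nonneg (le_of_lt hL) (norm_nonneg (x - xstar))))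
    rw [mul_pow, hs2]
    exact h3
  have hern : ‖er‖ ≤ M/2 * ‖x - xstar‖^2 := by rw [herdef]; exact htay
  have hPern : ‖er - (2 * ⟪vhat, er⟫) • vhat‖ = ‖er‖ := Th43.reflect_norm hvhat er
  -- triangle inequality
  have htri : ‖xplus - xstar‖ ≤ ((L-(1-2*α)*μ)/(L+(1-2*α)*μ)) * ‖x - xstar‖
      + 2*β*(Real.sqrt α * (L * ‖x - xstar‖)) + β*(M/2*‖x - xstar‖^2) := by
    rw [hdecomp]
    have t1 : ‖A1 + (2*β) • Dt - β • (er - (2 * ⟪vhat, er⟫) • vhat)‖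
        ≤ ‖A1 + (2*β) • Dt‖ + ‖β • (er - (2 * ⟪vhat, er⟫) • vhat)‖ := norm_sub_le _ _
    have t2 := norm_add_le A1 ((2*β) • Dt)
    have t3 : ‖(2*β) • Dt‖ = 2*β*‖Dt‖ := by
      rw [norm_smul, Real.norm_eq_abs, abs_of_pos (by positivity : (0:ℝ) < 2*β)]
    have t4 : ‖β • (er - (2 * ⟪vhat, er⟫) • vhat)‖ = β * ‖er‖ := by
      rw [norm_smul, Real.norm_eq_abs, abs_of_pos hβpos, hPern]
    have h5 := mul_le_mul_of_nonneg_left hDtn (by positivity : (0:ℝ) ≤ 2*β)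
    have h6 := mul_le_mul_of_nonneg_left hern (le_of_lt hβpos)
    linarith [hA1n]
  -- final arithmetic
  have hμne : μ ≠ 0 := ne_of_gt hμ0
  have hD0ne : L + (1-2*α)*μ ≠ 0 := ne_of_gt hD0
  have hkey2 : ((1 - 2*(1 - 2*α - 2*κ*(α + 2*Real.sqrt α))/(κ + 1 - 2*α)) * ‖x - xstar‖
      + (M/μ)/(κ+1-2*α) * ‖x - xstar‖^2)
      - (((L-(1-2*α)*μ)/(L+(1-2*α)*μ)) * ‖x - xstar‖
      + 2*β*(Real.sqrt α * (L * ‖x - xstar‖)) + β*(M/2*‖x - xstar‖^2))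
      = 4*L*(α + Real.sqrt α)*‖x - xstar‖ / (L+(1-2*α)*μ) := by
    have hκne : L/μ + 1 - 2*α ≠ 0 := by
      have h1 : 1 < L/μ := (one_lt_div hμ0).mpr hμL
      intro h; linarith
    rw [hκ, hβ, eq_div_iff hD0ne]
    have e1 : (M/μ)/(L/μ+1-2*α) = M/(L + (1-2*α)*μ) := by
      rw [div_div]
      congr 1
      field_simp
      ring
    have e2 : 2*(1 - 2*α - 2*(L/μ)*(α + 2*Real.sqrt α))/(L/μ + 1 - 2*α)
        = (2*μ*(1 - 2*α) - 4*L*(α + 2*Real.sqrt α))/(L + (1-2*α)*μ) := by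
      rw [div_eq_div_iff hκne hD0ne]
      field_simp
      ring
    rw [e1, e2]
    field_simp
    ring
  have hsub : 0 ≤ 4*L*(α + Real.sqrt α)*‖x - xstar‖ / (L+(1-2*α)*μ) := by
    apply div_nonneg _ (le_of_lt hD0)
    have h7 : (0:ℝ) ≤ α + Real.sqrt α := by positivity
    apply mul_nonneg (mul_nonneg (by linarith) h7) (norm_nonneg _)
  have hsub2 := hsub
  rw [← hkey2] at hsub2
  linarith [htri, hsub2]
end
end

section
/- Suppose E, x*, δ, M, μ, L satisfy Assumption (A) with index k (1 ≤ k ≤ d). Let x ∈ ℝ^d with r = ‖x − x*‖₂ < δ, let v₁, …, v_k be orthonormal eigenvectors of ∇²E(x) corresponding to its k smallest eigenvalues λ₁ ≤ … ≤ λ_k, let β = 2/(L+μ), and set x⁺ = x − β·(I − 2·Σ_{i=1}^k v_i·v_iᵀ)·∇E(x). Then ‖x⁺ − x*‖₂ ≤ (1 − 2μ/(L+μ))·r + M·r²/(L+μ). -/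
open Matrix Finset Filter

noncomputable section

/-!
Write `w = x - x*`, `H = ∇²E(x)` and `R = I - 2 ∑ vᵢ vᵢᵀ`. Eigenvectors of the symmetric `H`
for different eigenvalues are orthogonal, so the `vᵢ` lie in the negative eigenspace of `H`;
that space has dimension at most `k`, so the `k` orthonormal `vᵢ` span it. Hence `R` acts as `-1`
on the negative and as `+1` on the positive eigenvectors of `H`: it is an isometry and `R H = |H|`
has spectrum in `[μ, L]`, so `‖w - β R H w‖ ≤ (1 - 2μ/(L+μ)) ‖w‖`. The step error
`∇E(x) - H w` is the Taylor remainder of `∇E` at `x*`, of norm at most `M ‖w‖² / 2` because the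
Hessian is `M`-Lipschitz, and `β R` scales its norm by `β = 2/(L+μ)`.
-/

section Taylor

variable {E F : Type*} [NormedAddCommGroup E] [NormedSpace ℝ E]
  [NormedAddCommGroup F] [NormedSpace ℝ F]

theorem norm_sub_sub_fderiv_le_of_lipschitz {f : E → F} {f' : E → E →L[ℝ] F} {a b : E}
    {M : ℝ} (hf : ∀ y ∈ segment ℝ a b, HasFDerivAt f (f' y) y)
    (hlip : ∀ y ∈ segment ℝ a b, ‖f' y - f' b‖ ≤ M * ‖y - b‖) :
    ‖f b - f a - f' b (b - a)‖ ≤ M / 2 * ‖b - a‖ ^ 2 := by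
  -- Compare `t ↦ f (a + t • (b - a)) - f a - t • f' b (b - a)`, whose derivative has norm at most
  -- `M (1 - t) r²`, with the scalar bound `M (t - t² / 2) r²` on `[0, 1]`.
  set r := ‖b - a‖
  set γ : ℝ → E := fun t => a + t • (b - a)
  have hγ : ∀ t ∈ Set.Icc (0 : ℝ) 1, γ t ∈ segment ℝ a b := fun t ht => by
    rw [segment_eq_image']; exact ⟨t, ht, rfl⟩
  have hψ : ∀ t ∈ Set.Icc (0 : ℝ) 1, HasDerivAt (fun t => f (γ t) - f a - t • f' b (b - a))
      ((f' (γ t) - f' b) (b - a)) t := by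
    intro t ht
    have hγ' : HasDerivAt γ (b - a) t := by
      convert ((hasDerivAt_id' t).smul_const (b - a)).const_add a using 1
      rw [one_smul]
    convert (((hf _ (hγ t ht)).comp_hasDerivAt t hγ').sub_const (f a)).sub
      ((hasDerivAt_id' t).smul_const (f' b (b - a))) using 1
    · rfl
    · rw [one_smul, _root_.sub_apply]
  have hB : ∀ t, HasDerivAt (fun t : ℝ => M * (t - t ^ 2 / 2) * r ^ 2) (M * (1 - t) * r ^ 2) t :=
    fun t => by
      refine ((((hasDerivAt_id t).sub ((hasDerivAt_pow 2 t).div_const 2)).const_mul M).mul_const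
        (r ^ 2)).congr_deriv ?_
      norm_num
  have key := image_norm_le_of_norm_deriv_right_le_deriv_boundary
    (fun t ht => (hψ t ht).continuousAt.continuousWithinAt)
    (fun t ht => (hψ t (Set.Ico_subset_Icc_self ht)).hasDerivWithinAt)
    (by simp [γ]) hB ?_ (Set.right_mem_Icc.2 zero_le_one)
  · convert key using 2 <;> simp [γ]; ring
  intro t ht
  have hdist : γ t - b = (1 - t) • (a - b) := by simp only [γ]; module
  calc ‖(f' (γ t) - f' b) (b - a)‖ ≤ ‖f' (γ t) - f' b‖ * r := ContinuousLinearMap.le_opNorm _ _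
    _ ≤ M * ‖γ t - b‖ * r := by gcongr; exact hlip _ (hγ t (Set.Ico_subset_Icc_self ht))
    _ = M * (1 - t) * r ^ 2 := by
      rw [hdist, norm_smul, Real.norm_of_nonneg (by linarith [ht.2]), norm_sub_rev]; ring

end Taylor

theorem abs_one_sub_two_div_add_mul_le {μ L a : ℝ} (hμ : 0 < μ) (ha : μ ≤ a) (ha' : a ≤ L) :
    |1 - 2 / (L + μ) * a| ≤ 1 - 2 * μ / (L + μ) := by
  have hLμ : 0 < L + μ := by linarith
  have h₁ : 1 - 2 / (L + μ) * a = (L + μ - 2 * a) / (L + μ) := by field_simp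
  have h₂ : 1 - 2 * μ / (L + μ) = (L - μ) / (L + μ) := by field_simp; ring
  rw [h₁, h₂, abs_div, abs_of_pos hLμ, div_le_div_iff_of_pos_right hLμ, abs_le]
  constructor <;> linarith

open scoped RealInnerProductSpace

section Spectral

variable {E : Type*} [NormedAddCommGroup E] [InnerProductSpace ℝ E]
  {ι κ : Type*} [Fintype ι] [Fintype κ]

theorem LinearMap.IsSymmetric.inner_eq_zero_of_apply_eq_smul {T : E →ₗ[ℝ] E}
    (hT : T.IsSymmetric) {x y : E} {a b : ℝ} (hx : T x = a • x) (hy : T y = b • y)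
    (hab : a ≠ b) : ⟪x, y⟫ = 0 := by
  have h := hT x y
  rw [hx, hy, real_inner_smul_left, real_inner_smul_right] at h
  have h' : (a - b) * ⟪x, y⟫ = 0 := by linear_combination h
  exact (mul_eq_zero.1 h').resolve_left (sub_ne_zero.2 hab)

theorem Orthonormal.sum_inner_smul_eq_self {v : κ → E} (hv : Orthonormal ℝ v) {z : E}
    (hz : z ∈ Submodule.span ℝ (Set.range v)) : ∑ j, ⟪v j, z⟫ • v j = z := by
  obtain ⟨c, rfl⟩ := (Submodule.mem_span_range_iff_exists_fun ℝ).1 hz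
  simp_rw [hv.inner_right_fintype]

theorem LinearMap.IsSymmetric.span_range_eq_span_negative {T : E →ₗ[ℝ] E} (hT : T.IsSymmetric)
    (b : OrthonormalBasis ι ℝ E) {α : ι → ℝ} (hb : ∀ i, T (b i) = α i • b i)
    {v : κ → E} (hv : Orthonormal ℝ v) {γ : κ → ℝ} (hvT : ∀ j, T (v j) = γ j • v j)
    (hneg : ∀ j, γ j < 0) (hcard : Fintype.card {i // α i < 0} ≤ Fintype.card κ) :
    Submodule.span ℝ (Set.range v) =
      Submodule.span ℝ (Set.range fun i : {i // α i < 0} => b i) := by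
  have := Module.Finite.of_basis b.toBasis
  refine Submodule.eq_of_le_of_finrank_le ?_ ?_
  · rw [Submodule.span_le]
    rintro _ ⟨j, rfl⟩
    rw [← b.sum_repr' (v j)]
    refine Submodule.sum_mem _ fun i _ => ?_
    by_cases hi : α i < 0
    · exact Submodule.smul_mem _ _ (Submodule.subset_span ⟨⟨i, hi⟩, rfl⟩)
    · rw [real_inner_comm, hT.inner_eq_zero_of_apply_eq_smul (hvT j) (hb i)
        (by linarith [hneg j, not_lt.1 hi]), zero_smul]
      exact Submodule.zero_mem _
  · rw [finrank_span_eq_card hv.linearIndependent]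
    exact (finrank_range_le_card _).trans hcard

theorem LinearMap.IsSymmetric.sum_inner_smul_eigenbasis {T : E →ₗ[ℝ] E} (hT : T.IsSymmetric)
    (b : OrthonormalBasis ι ℝ E) {α : ι → ℝ} (hb : ∀ i, T (b i) = α i • b i)
    {v : κ → E} (hv : Orthonormal ℝ v) {γ : κ → ℝ} (hvT : ∀ j, T (v j) = γ j • v j)
    (hneg : ∀ j, γ j < 0) (hcard : Fintype.card {i // α i < 0} ≤ Fintype.card κ) (i : ι) :
    ∑ j, ⟪v j, b i⟫ • v j = if α i < 0 then b i else 0 := by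
  split_ifs with hi
  · refine hv.sum_inner_smul_eq_self ?_
    rw [hT.span_range_eq_span_negative b hb hv hvT hneg hcard]
    exact Submodule.subset_span ⟨⟨i, hi⟩, rfl⟩
  · refine Finset.sum_eq_zero fun j _ => ?_
    rw [hT.inner_eq_zero_of_apply_eq_smul (hvT j) (hb i) (by linarith [hneg j, not_lt.1 hi]),
      zero_smul]

theorem OrthonormalBasis.norm_apply_le_of_apply_eq_smul_s12 (b : OrthonormalBasis ι ℝ E)
    {S : E →ₗ[ℝ] E} {σ : ι → ℝ} {c : ℝ} (hc : 0 ≤ c) (hS : ∀ i, S (b i) = σ i • b i)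
    (hσ : ∀ i, |σ i| ≤ c) (w : E) : ‖S w‖ ≤ c * ‖w‖ := by
  have hSw : S w = ∑ i, (σ i * ⟪b i, w⟫) • b i := by
    conv_lhs => rw [← b.sum_repr' w]
    simp [map_sum, map_smul, hS, smul_smul, mul_comm]
  have hsq : ‖S w‖ ^ 2 ≤ (c * ‖w‖) ^ 2 := by
    rw [mul_pow, ← b.sum_sq_norm_inner_right, ← b.sum_sq_norm_inner_right, Finset.mul_sum, hSw]
    refine Finset.sum_le_sum fun i _ => ?_
    rw [b.orthonormal.inner_right_fintype, norm_mul, mul_pow]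
    gcongr
    exact (Real.norm_eq_abs _).trans_le (hσ i)
  exact le_of_sq_le_sq hsq (by positivity)

theorem norm_sub_smul_reflection_apply_le {T : E →ₗ[ℝ] E} (hT : T.IsSymmetric)
    (b : OrthonormalBasis ι ℝ E) {α : ι → ℝ} (hb : ∀ i, T (b i) = α i • b i)
    {μ L : ℝ} (hμ : 0 < μ) (hμL : μ ≤ L) (hα : ∀ i, μ ≤ |α i| ∧ |α i| ≤ L)
    {v : κ → E} (hv : Orthonormal ℝ v) {γ : κ → ℝ} (hvT : ∀ j, T (v j) = γ j • v j)
    (hneg : ∀ j, γ j < 0) (hcard : Fintype.card {i // α i < 0} ≤ Fintype.card κ)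
    {R : E →ₗ[ℝ] E} (hR : ∀ z, R z = z - (2 : ℝ) • ∑ j, ⟪v j, z⟫ • v j) (w e : E) :
    ‖w - (2 / (L + μ)) • R (T w + e)‖ ≤
      (1 - 2 * μ / (L + μ)) * ‖w‖ + 2 / (L + μ) * ‖e‖ := by
  set β := 2 / (L + μ)
  have hβ : 0 < β := div_pos two_pos (by linarith)
  have hRb (i : ι) : R (b i) = (if α i < 0 then -1 else 1 : ℝ) • b i := by
    rw [hR, hT.sum_inner_smul_eigenbasis b hb hv hvT hneg hcard]
    split_ifs <;> module
  have hRe : ‖R e‖ ≤ 1 * ‖e‖ :=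
    b.norm_apply_le_of_apply_eq_smul_s12 zero_le_one hRb (fun i => by split_ifs <;> simp) e
  set S : E →ₗ[ℝ] E := LinearMap.id - β • R ∘ₗ T
  have hSb (i : ι) : S (b i) = (1 - β * |α i|) • b i := by
    have hsign : (if α i < 0 then -1 else 1 : ℝ) * α i = |α i| := by
      split_ifs with h
      · rw [abs_of_neg h]; ring
      · rw [abs_of_nonneg (not_lt.1 h)]; ring
    simp only [S, LinearMap.sub_apply, LinearMap.smul_apply, LinearMap.comp_apply,
      LinearMap.id_apply, hb, map_smul, hRb, smul_smul, ← hsign]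
    module
  have hκ : 0 ≤ 1 - 2 * μ / (L + μ) := by rw [sub_nonneg, div_le_one (by linarith)]; linarith
  have hSw := b.norm_apply_le_of_apply_eq_smul_s12 hκ hSb
    (fun i => abs_one_sub_two_div_add_mul_le hμ (hα i).1 (hα i).2) w
  calc ‖w - β • R (T w + e)‖ = ‖S w - β • R e‖ := by
        simp only [S, map_add, smul_add, LinearMap.sub_apply, LinearMap.smul_apply,
          LinearMap.comp_apply, LinearMap.id_apply, sub_sub]
    _ ≤ (1 - 2 * μ / (L + μ)) * ‖w‖ + β * ‖e‖ := by
      refine (norm_sub_le _ _).trans (add_le_add hSw ?_)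
      rw [norm_smul, Real.norm_of_nonneg hβ.le]
      exact mul_le_mul_of_nonneg_left (by simpa using hRe) hβ.le

end Spectral

theorem toEuclideanLin_outer {d : ℕ} (p q z : EVec d) :
    Matrix.toEuclideanLin (outer p q) z = ⟪q, z⟫ • p := by
  ext i
  simp [Matrix.toLpLin_apply, Matrix.mulVec, dotProduct, outer, PiLp.inner_apply,
    Finset.mul_sum, mul_assoc, mul_comm]

theorem toEuclideanLin_one_sub_two_smul_sum_outer {d : ℕ} {κ : Type*} [Fintype κ]
    (v : κ → EVec d) (z : EVec d) :
    Matrix.toEuclideanLin (1 - (2 : ℝ) • ∑ j, outer (v j) (v j)) z =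
      z - (2 : ℝ) • ∑ j, ⟪v j, z⟫ • v j := by
  simp [map_sub, map_sum, toEuclideanLin_outer]

theorem AssumptionA.norm_gradient_sub_hess_le {d k : ℕ} {E : EVec d → ℝ}
    {hess : EVec d → Matrix (Fin d) (Fin d) ℝ} {xstar : EVec d} {δ M μ L : ℝ}
    (hA : AssumptionA k E hess xstar δ M μ L) {x : EVec d} (hx : ‖x - xstar‖ < δ) :
    ‖gradient E x - mulVecE (hess x) (x - xstar)‖ ≤ M / 2 * ‖x - xstar‖ ^ 2 := by
  obtain ⟨-, hder, -, hgrad0, hδ, -, -, -, hlip, -⟩ := hA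
  refine (sub_zero (gradient E x) ▸ hgrad0 ▸ norm_sub_sub_fderiv_le_of_lipschitz (M := M)
    (fun y _ => hder y) fun y hy => ?_)
  have hyδ : y ∈ Metric.ball xstar δ := (convex_ball xstar δ).segment_subset
    (Metric.mem_ball_self hδ) (mem_ball_iff_norm.2 hx) hy
  simpa [specNorm, map_sub] using hlip y x (mem_ball_iff_norm.1 hyδ) hx

theorem indexk_exact_single_step_general {d k : ℕ}
    (E : EVec d → ℝ)
    (hess : EVec d → Matrix (Fin d) (Fin d) ℝ)
    (xstar : EVec d) (δ M μ L : ℝ)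
    (hA : AssumptionA k E hess xstar δ M μ L)
    (x : EVec d) (hx : ‖x - xstar‖ < δ)
    (v : Fin k → EVec d)
    (hortho : ∀ i j, (inner ℝ (v i) (v j) : ℝ) = if i = j then 1 else 0)
    (lam : Fin k → ℝ)
    (heig : ∀ i, mulVecE (hess x) (v i) = lam i • v i)
    (hneg : ∀ i, lam i < 0)
    (β : ℝ) (hβ : β = 2 / (L + μ))
    (xplus : EVec d)
    (hstep : xplus = x - β • mulVecE
      (1 - (2 : ℝ) • ∑ i, outer (v i) (v i)) (gradient E x)) :
    ‖xplus - xstar‖ ≤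
      (1 - 2 * μ / (L + μ)) * ‖x - xstar‖ + M * ‖x - xstar‖ ^ 2 / (L + μ) := by
  have htaylor := hA.norm_gradient_sub_hess_le hx
  obtain ⟨-, -, hsymm, -, -, -, hμ, hμL, -, hspec⟩ := hA
  obtain ⟨u, α, hu, hu_eig, -, -, hα_pos, hα_bd⟩ := hspec x hx
  set T := Matrix.toEuclideanLin (hess x)
  have hT : T.IsSymmetric :=
    Matrix.isSymmetric_toEuclideanLin_iff.2 (Matrix.isHermitian_iff_isSymm.2 (hsymm x))
  have hu' : Orthonormal ℝ u := orthonormal_iff_ite.2 hu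
  let b : OrthonormalBasis (Fin d) ℝ (EVec d) := OrthonormalBasis.mk hu'
    (hu'.linearIndependent.span_eq_top_of_card_eq_finrank' (by simp)).ge
  have hb : ⇑b = u := OrthonormalBasis.coe_mk _ _
  have hcard : Fintype.card {i // α i < 0} ≤ Fintype.card (Fin k) :=
    Fintype.card_le_of_injective (fun i => ⟨i.1, not_le.1 fun h => (hα_pos i.1 h).not_gt i.2⟩)
      fun i j h => Subtype.ext (Fin.ext (Fin.mk.inj_iff.1 h))
  have hsplit : xplus - xstar = (x - xstar) - β • (Matrix.toEuclideanLin
      (1 - (2 : ℝ) • ∑ i, outer (v i) (v i))) (T (x - xstar) + (gradient E x - T (x - xstar))) := by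
    rw [hstep]; simp only [mulVecE, add_sub_cancel]; abel
  rw [hsplit, hβ]
  refine (norm_sub_smul_reflection_apply_le hT b (fun i => by rw [hb]; exact hu_eig i) hμ hμL.le
    hα_bd (orthonormal_iff_ite.2 hortho) heig hneg hcard
    (toEuclideanLin_one_sub_two_smul_sum_outer v) _ _).trans ?_
  calc _ ≤ (1 - 2 * μ / (L + μ)) * ‖x - xstar‖ + 2 / (L + μ) * (M / 2 * ‖x - xstar‖ ^ 2) := by
        gcongr
        · exact div_nonneg zero_le_two (by linarith)
        · exact htaylor
    _ = _ := by ring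

/-- Theorem 5.1 (single-step estimate, exact eigenvectors, index k): under Assumption (A)
with index `k`, if `r = ‖x - x*‖₂ < δ`, `v₁, …, v_k` are orthonormal eigenvectors of
`∇²E(x)` corresponding to its `k` smallest eigenvalues (the negative ones, sorted),
`β = 2/(L+μ)` and `x⁺ = x - β (I - 2 Σᵢ vᵢ vᵢᵀ) ∇E(x)`, then
`‖x⁺ - x*‖₂ ≤ (1 - 2μ/(L+μ)) r + M r² / (L+μ)`. -/
theorem indexk_exact_single_step {d k : ℕ} (hk : 1 ≤ k) (hkd : k ≤ d)
    (E : EVec d → ℝ)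
    (hess : EVec d → Matrix (Fin d) (Fin d) ℝ)
    (xstar : EVec d) (δ M μ L : ℝ)
    (hA : AssumptionA k E hess xstar δ M μ L)
    (x : EVec d) (hx : ‖x - xstar‖ < δ)
    (v : Fin k → EVec d)
    (hortho : ∀ i j, (inner ℝ (v i) (v j) : ℝ) = if i = j then 1 else 0)
    (lam : Fin k → ℝ) (hmono : Monotone lam)
    (heig : ∀ i, mulVecE (hess x) (v i) = lam i • v i)
    (hneg : ∀ i, lam i < 0)
    (β : ℝ) (hβ : β = 2 / (L + μ))
    (xplus : EVec d)
    (hstep : xplus = x - β • mulVecE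
      (1 - (2 : ℝ) • ∑ i, outer (v i) (v i)) (gradient E x)) :
    ‖xplus - xstar‖ ≤
      (1 - 2 * μ / (L + μ)) * ‖x - xstar‖ + M * ‖x - xstar‖ ^ 2 / (L + μ) :=
  indexk_exact_single_step_general E hess xstar δ M μ L hA x hx v hortho lam heig hneg β hβ xplus
    hstep
end
end

section
/- Let V = [V_k, V_{−k}] and V̂ = [V̂_k, V̂_{−k}] be d×d real orthogonal matrices, where V_k, V̂_k ∈ ℝ^{d×k}, and suppose ‖V_k·V_kᵀ − V̂_k·V̂_kᵀ‖₂ ≤ α for some α ∈ [0,1]. Set C_k = V_kᵀ·V̂_k ∈ ℝ^{k×k} and C_{−k} = V_{−k}ᵀ·V̂_k ∈ ℝ^{(d−k)×k}. Then V̂_k = V_k·C_k + V_{−k}·C_{−k}, the matrix inequalities (1−α)·I ⪯ C_k·C_kᵀ ⪯ I hold (in the positive semidefinite order), and ‖C_{−k}‖₂ ≤ α. -/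
open Matrix Finset Filter

noncomputable section

/-! Write `D = V_k V_kᵀ - V̂_k V̂_kᵀ`. Orthonormality of the columns of `V` and `V̂` gives
`C_k C_kᵀ = V_kᵀ (V_k V_kᵀ - D) V_k = 1 - V_kᵀ D V_k` and
`C_{-k} = V_{-k}ᵀ V̂_k V̂_kᵀ V̂_k = V_{-k}ᵀ (V_k V_kᵀ - D) V̂_k = -V_{-k}ᵀ D V̂_k`.
Multiplying by matrices with orthonormal columns does not increase the spectral norm, so both
error terms have norm at most `‖D‖ ≤ α`, while `‖C_k‖ ≤ 1`. A symmetric matrix of spectral norm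
at most `a` lies below `a • 1` in the positive semidefinite order, which gives both bounds on
`C_k C_kᵀ`. -/

open scoped Matrix.Norms.L2Operator

lemma specNorm_eq_l2_opNorm {m n : Type*} [Fintype m] [Fintype n] [DecidableEq n]
    (A : Matrix m n ℝ) : specNorm A = ‖A‖ :=
  rfl

namespace Matrix

variable {m n p q : Type*} [Fintype m] [Fintype n] [Fintype p] [Fintype q]

lemma transpose_mul_blocks_of_fromCols_mul_transpose_eq_one {R : Type*} [CommRing R]
    [DecidableEq m] [DecidableEq n] [DecidableEq p] (e : m ≃ n ⊕ p) {A : Matrix m n R}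
    {B : Matrix m p R} (h : fromCols A B * (fromCols A B)ᵀ = 1) :
    Aᵀ * A = 1 ∧ Bᵀ * A = 0 ∧ Bᵀ * B = 1 := by
  have h' := (mul_eq_one_comm_of_equiv e).mp h
  rw [transpose_fromCols, fromRows_mul_fromCols, ← fromBlocks_one] at h'
  obtain ⟨hAA, -, hBA, hBB⟩ := fromBlocks_inj.mp h'
  exact ⟨hAA, hBA, hBB⟩

lemma l2_opNorm_transpose [DecidableEq m] [DecidableEq n] (A : Matrix m n ℝ) : ‖Aᵀ‖ = ‖A‖ := by
  simpa only [conjTranspose_eq_transpose_of_trivial] using l2_opNorm_conjTranspose A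

lemma l2_opNorm_one_le [DecidableEq n] : ‖(1 : Matrix n n ℝ)‖ ≤ 1 := by
  rw [cstar_norm_def, map_one]
  exact ContinuousLinearMap.norm_id_le

lemma l2_opNorm_le_one_of_transpose_mul_self_eq_one [DecidableEq n] {A : Matrix m n ℝ}
    (h : Aᵀ * A = 1) : ‖A‖ ≤ 1 := by
  have hsq : ‖A‖ * ‖A‖ ≤ 1 := by
    rw [← l2_opNorm_conjTranspose_mul_self, conjTranspose_eq_transpose_of_trivial, h]
    exact l2_opNorm_one_le
  nlinarith [norm_nonneg A]

lemma l2_opNorm_mul_le_one [DecidableEq n] [DecidableEq p] {A : Matrix m n ℝ}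
    {B : Matrix n p ℝ} (hA : ‖A‖ ≤ 1) (hB : ‖B‖ ≤ 1) : ‖A * B‖ ≤ 1 :=
  (l2_opNorm_mul A B).trans (mul_le_one₀ hA (norm_nonneg B) hB)

lemma l2_opNorm_transpose_mul_mul_le [DecidableEq m] [DecidableEq n] [DecidableEq p]
    [DecidableEq q] {A : Matrix m n ℝ} {B : Matrix p q ℝ} (hA : ‖A‖ ≤ 1) (hB : ‖B‖ ≤ 1)
    (M : Matrix m p ℝ) : ‖Aᵀ * M * B‖ ≤ ‖M‖ :=
  calc ‖Aᵀ * M * B‖ ≤ ‖Aᵀ‖ * ‖M‖ * ‖B‖ :=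
        (l2_opNorm_mul _ _).trans (by gcongr; exact l2_opNorm_mul _ _)
    _ ≤ 1 * ‖M‖ * 1 := by gcongr; rwa [l2_opNorm_transpose]
    _ = ‖M‖ := by ring

lemma dotProduct_mulVec_le_l2_opNorm_mul [DecidableEq n] (M : Matrix n n ℝ) (x : n → ℝ) :
    x ⬝ᵥ M *ᵥ x ≤ ‖M‖ * (x ⬝ᵥ x) := by
  set y : EuclideanSpace ℝ n := WithLp.toLp 2 x
  have hy : x ⬝ᵥ x = ‖y‖ ^ 2 := by
    rw [← real_inner_self_eq_norm_sq, EuclideanSpace.inner_eq_star_dotProduct, star_trivial]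
  calc x ⬝ᵥ M *ᵥ x = inner ℝ y (toEuclideanCLM (𝕜 := ℝ) M y) :=
        (inner_toEuclideanCLM M y y).symm
    _ ≤ ‖y‖ * ‖toEuclideanCLM (𝕜 := ℝ) M y‖ := real_inner_le_norm _ _
    _ ≤ ‖y‖ * (‖M‖ * ‖y‖) := by gcongr; exact (toEuclideanCLM (𝕜 := ℝ) M).le_opNorm y
    _ = ‖M‖ * (x ⬝ᵥ x) := by rw [hy]; ring

lemma posSemidef_smul_one_sub_of_l2_opNorm_le [DecidableEq n] {M : Matrix n n ℝ}
    (hM : M.IsHermitian) {a : ℝ} (h : ‖M‖ ≤ a) : (a • 1 - M).PosSemidef := by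
  refine .of_dotProduct_mulVec_nonneg ((isHermitian_one.smul (IsSelfAdjoint.all a)).sub hM)
    fun x => ?_
  rw [star_trivial, sub_mulVec, smul_mulVec, one_mulVec, dotProduct_sub, dotProduct_smul,
    smul_eq_mul]
  have hx : 0 ≤ x ⬝ᵥ x := by simpa using dotProduct_self_star_nonneg x
  nlinarith [dotProduct_mulVec_le_l2_opNorm_mul M x, mul_le_mul_of_nonneg_right h hx]

lemma posSemidef_one_sub_mul_transpose_of_l2_opNorm_le_one [DecidableEq m] [DecidableEq n]
    {C : Matrix m n ℝ} (hC : ‖C‖ ≤ 1) : (1 - C * Cᵀ).PosSemidef := by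
  rw [← one_smul ℝ (1 : Matrix m m ℝ)]
  refine posSemidef_smul_one_sub_of_l2_opNorm_le ?_ ?_
  · simpa only [conjTranspose_eq_transpose_of_trivial] using isHermitian_mul_conjTranspose_self C
  · exact l2_opNorm_mul_le_one hC (by rwa [l2_opNorm_transpose])

lemma posSemidef_mul_transpose_sub_of_l2_opNorm_le [DecidableEq m] [DecidableEq n]
    {U : Matrix m n ℝ} {X : Matrix m p ℝ} (hU : Uᵀ * U = 1) {a : ℝ}
    (h : ‖U * Uᵀ - X * Xᵀ‖ ≤ a) : (Uᵀ * X * (Uᵀ * X)ᵀ - (1 - a) • 1).PosSemidef := by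
  have hD : (U * Uᵀ - X * Xᵀ).IsHermitian := by
    simpa only [conjTranspose_eq_transpose_of_trivial] using
      (isHermitian_mul_conjTranspose_self U).sub (isHermitian_mul_conjTranspose_self X)
  have hU₁ : ‖U‖ ≤ 1 := l2_opNorm_le_one_of_transpose_mul_self_eq_one hU
  have hsandwich : Uᵀ * X * (Uᵀ * X)ᵀ - (1 - a) • 1 = a • 1 - Uᵀ * (U * Uᵀ - X * Xᵀ) * U := by
    simp only [Matrix.mul_sub, Matrix.sub_mul, transpose_mul, transpose_transpose,
      ← Matrix.mul_assoc, hU, Matrix.one_mul, sub_smul, one_smul]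
    abel
  rw [hsandwich]
  refine posSemidef_smul_one_sub_of_l2_opNorm_le ?_ ?_
  · simpa only [conjTranspose_eq_transpose_of_trivial] using isHermitian_conjTranspose_mul_mul U hD
  · exact (l2_opNorm_transpose_mul_mul_le hU₁ hU₁ _).trans h

lemma l2_opNorm_transpose_mul_le_of_transpose_mul_eq_zero [DecidableEq m] [DecidableEq p]
    [DecidableEq q] {U : Matrix m n ℝ} {W : Matrix m q ℝ} {X : Matrix m p ℝ} (hWU : Wᵀ * U = 0)
    (hW : ‖W‖ ≤ 1) (hX : Xᵀ * X = 1) : ‖Wᵀ * X‖ ≤ ‖U * Uᵀ - X * Xᵀ‖ := by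
  have hsandwich : Wᵀ * X = -(Wᵀ * (U * Uᵀ - X * Xᵀ) * X) := by
    simp only [Matrix.mul_sub, Matrix.sub_mul, ← Matrix.mul_assoc, hWU, Matrix.zero_mul]
    rw [Matrix.mul_assoc _ Xᵀ, hX, Matrix.mul_one, zero_sub, neg_neg]
  rw [hsandwich, norm_neg]
  exact l2_opNorm_transpose_mul_mul_le hW (l2_opNorm_le_one_of_transpose_mul_self_eq_one hX) _

end Matrix

theorem subspace_representation_general {d k : ℕ} (hk : k ≤ d)
    (Vk Vhatk : Matrix (Fin d) (Fin k) ℝ)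
    (Vmk Vhatmk : Matrix (Fin d) (Fin (d - k)) ℝ)
    (hV : Matrix.fromCols Vk Vmk * (Matrix.fromCols Vk Vmk)ᵀ = 1)
    (hVhat : Matrix.fromCols Vhatk Vhatmk * (Matrix.fromCols Vhatk Vhatmk)ᵀ = 1)
    (α : ℝ)
    (hclose : specNorm (Vk * Vkᵀ - Vhatk * Vhatkᵀ) ≤ α) :
    Vhatk = Vk * (Vkᵀ * Vhatk) + Vmk * (Vmkᵀ * Vhatk) ∧
    (Vkᵀ * Vhatk * (Vkᵀ * Vhatk)ᵀ - (1 - α) • (1 : Matrix (Fin k) (Fin k) ℝ)).PosSemidef ∧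
    ((1 : Matrix (Fin k) (Fin k) ℝ) - Vkᵀ * Vhatk * (Vkᵀ * Vhatk)ᵀ).PosSemidef ∧
    specNorm (Vmkᵀ * Vhatk) ≤ α := by
  have e : Fin d ≃ Fin k ⊕ Fin (d - k) :=
    (finCongr (Nat.add_sub_cancel' hk).symm).trans finSumFinEquiv.symm
  obtain ⟨hVk, hVmkVk, hVmk⟩ := transpose_mul_blocks_of_fromCols_mul_transpose_eq_one e hV
  obtain ⟨hVhatk, -, -⟩ := transpose_mul_blocks_of_fromCols_mul_transpose_eq_one e hVhat
  have hVsum : Vk * Vkᵀ + Vmk * Vmkᵀ = 1 := by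
    simpa only [transpose_fromCols, fromCols_mul_fromRows] using hV
  have hVk₁ := l2_opNorm_le_one_of_transpose_mul_self_eq_one hVk
  have hCk : ‖Vkᵀ * Vhatk‖ ≤ 1 :=
    l2_opNorm_mul_le_one ((l2_opNorm_transpose Vk).trans_le hVk₁)
      (l2_opNorm_le_one_of_transpose_mul_self_eq_one hVhatk)
  rw [specNorm_eq_l2_opNorm] at hclose ⊢
  refine ⟨?_, posSemidef_mul_transpose_sub_of_l2_opNorm_le hVk hclose,
    posSemidef_one_sub_mul_transpose_of_l2_opNorm_le_one hCk,
    (l2_opNorm_transpose_mul_le_of_transpose_mul_eq_zero hVmkVk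
      (l2_opNorm_le_one_of_transpose_mul_self_eq_one hVmk) hVhatk).trans hclose⟩
  rw [← Matrix.mul_assoc, ← Matrix.mul_assoc, ← Matrix.add_mul, hVsum, Matrix.one_mul]

/-- Lemma 5.1: if `V = [V_k, V_{-k}]` and `V̂ = [V̂_k, V̂_{-k}]` are orthogonal with
`‖V_k V_kᵀ - V̂_k V̂_kᵀ‖₂ ≤ α`, then with `C_k = V_kᵀ V̂_k` and `C_{-k} = V_{-k}ᵀ V̂_k`
we have `V̂_k = V_k C_k + V_{-k} C_{-k}`, `(1-α) I ⪯ C_k C_kᵀ ⪯ I` and `‖C_{-k}‖₂ ≤ α`. -/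
theorem subspace_representation {d k : ℕ} (hk : k ≤ d)
    (Vk Vhatk : Matrix (Fin d) (Fin k) ℝ)
    (Vmk Vhatmk : Matrix (Fin d) (Fin (d - k)) ℝ)
    (hV : Matrix.fromCols Vk Vmk * (Matrix.fromCols Vk Vmk)ᵀ = 1)
    (hVhat : Matrix.fromCols Vhatk Vhatmk * (Matrix.fromCols Vhatk Vhatmk)ᵀ = 1)
    (α : ℝ) (hα0 : 0 ≤ α) (hα1 : α ≤ 1)
    (hclose : specNorm (Vk * Vkᵀ - Vhatk * Vhatkᵀ) ≤ α) :
    Vhatk = Vk * (Vkᵀ * Vhatk) + Vmk * (Vmkᵀ * Vhatk) ∧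
    (Vkᵀ * Vhatk * (Vkᵀ * Vhatk)ᵀ - (1 - α) • (1 : Matrix (Fin k) (Fin k) ℝ)).PosSemidef ∧
    ((1 : Matrix (Fin k) (Fin k) ℝ) - Vkᵀ * Vhatk * (Vkᵀ * Vhatk)ᵀ).PosSemidef ∧
    specNorm (Vmkᵀ * Vhatk) ≤ α :=
  subspace_representation_general hk Vk Vhatk Vmk Vhatmk hV hVhat α hclose
end
end
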